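/- arXiv:1009.0502 — 8 statements merged into one kernel-verified Lean document; each statement's English description precedes it below -/
import Mathlib

section
/- If P₁, P₂ ⊆ A* are finite maximal prefix codes with P₂·A* ⊆ P₁·A*, then |P₂| ≥ |P₁|. -/
/-- Words over the alphabet `A = Fin k`. -/
abbrev Word (k : ℕ) := List (Fin k)

/-- A prefix code: a set of pairwise prefix-incomparable words. -/
def PrefixCode {k : ℕ} (P : Set (Word k)) : Prop :=
  ∀ u ∈ P, ∀ v ∈ P, u <+: v → u = v

/-- A maximal prefix code: not properly contained in any other prefix code. -/
def MaxPrefixCode {k : ℕ} (P : Set (Word k)) : Prop :=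
  PrefixCode P ∧ ∀ Q : Set (Word k), PrefixCode Q → P ⊆ Q → P = Q

/-- `pref S`: the set of all prefixes of words of `S`. -/
def pref {k : ℕ} (S : Set (Word k)) : Set (Word k) := {u | ∃ v ∈ S, u <+: v}

/-- `spref P = pref P \ P`: the strict prefixes (inner vertices of the prefix tree). -/
def spref {k : ℕ} (P : Set (Word k)) : Set (Word k) := pref P \ P

/-- The right ideal `C·A*` generated by a set of words `C`. -/
def genIdeal {k : ℕ} (C : Set (Word k)) : Set (Word k) := {x | ∃ c ∈ C, c <+: x}

/-- A right ideal of `A*`. -/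
def RightIdeal {k : ℕ} (R : Set (Word k)) : Prop := ∀ x ∈ R, ∀ w : Word k, x ++ w ∈ R

/-- A finitely generated right ideal. -/
def FinGenIdeal {k : ℕ} (R : Set (Word k)) : Prop :=
  ∃ C : Set (Word k), C.Finite ∧ R = genIdeal C

/-- An essential right ideal: one that intersects every nonempty right ideal. -/
def EssentialIdeal {k : ℕ} (R : Set (Word k)) : Prop :=
  ∀ I : Set (Word k), RightIdeal I → I.Nonempty → (R ∩ I).Nonempty

/-- The minimal generating set of a right ideal: its prefix-minimal elements. -/
def minGen {k : ℕ} (R : Set (Word k)) : Set (Word k) :=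
  {x ∈ R | ∀ y ∈ R, y <+: x → y = x}

/-- If `P₁, P₂` are finite maximal prefix codes with
`P₂·A* ⊆ P₁·A*` then `|P₂| ≥ |P₁|`. -/
theorem statement2 (k : ℕ) (hk : 2 ≤ k) (P₁ P₂ : Set (Word k))
    (h₁fin : P₁.Finite) (h₂fin : P₂.Finite)
    (h₁ : MaxPrefixCode P₁) (h₂ : MaxPrefixCode P₂)
    (hsub : genIdeal P₂ ⊆ genIdeal P₁) :
    P₁.ncard ≤ P₂.ncard := by
  classical
  -- every word is prefix-comparable with some element of P₂ (maximality)
  have hcomp : ∀ w : Word k, ∃ p ∈ P₂, p <+: w ∨ w <+: p := by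
    intro w
    by_contra hcon
    push_neg at hcon
    have hQ : PrefixCode (insert w P₂) := by
      intro u hu v hv huv
      rcases hu with rfl | hu
      · rcases hv with rfl | hv
        · rfl
        · exact absurd huv (hcon v hv).2
      · rcases hv with rfl | hv
        · exact absurd huv (hcon u hu).1
        · exact h₂.1 u hu v hv huv
    have := h₂.2 (insert w P₂) hQ (Set.subset_insert _ _)
    have hwP : w ∈ P₂ := this ▸ Set.mem_insert _ _
    exact (hcon w hwP).1 List.prefix_rfl
  -- each element of P₂ has a P₁-prefix
  have hpre : ∀ p ∈ P₂, ∃ c ∈ P₁, c <+: p := by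
    intro p hp
    exact hsub ⟨p, hp, List.prefix_rfl⟩
  have hP₁ : P₁ ⊆ (fun p => if h : ∃ c ∈ P₁, c <+: p then h.choose else []) '' P₂ := by
    intro p₁ hp₁
    obtain ⟨p₂, hp₂, hc⟩ := hcomp p₁
    refine ⟨p₂, hp₂, ?_⟩
    have hex : ∃ c ∈ P₁, c <+: p₂ := hpre p₂ hp₂
    simp only [dif_pos hex]
    obtain ⟨hcP₁, hcpre⟩ := hex.choose_spec
    rcases hc with h21 | h12
    · -- p₂ <+: p₁
      exact h₁.1 _ hcP₁ _ hp₁ (hcpre.trans h21)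
    · -- p₁ <+: p₂ : two P₁-prefixes of p₂ are comparable hence equal
      rcases List.prefix_or_prefix_of_prefix hcpre h12 with hcp | hpc
      · exact h₁.1 _ hcP₁ _ hp₁ hcp
      · exact (h₁.1 _ hp₁ _ hcP₁ hpc).symm
  calc P₁.ncard ≤ ((fun p => if h : ∃ c ∈ P₁, c <+: p then h.choose else []) '' P₂).ncard :=
        Set.ncard_le_ncard hP₁ (h₂fin.image _)
    _ ≤ P₂.ncard := Set.ncard_image_le h₂fin
end

section
/- For all φ, ψ ∈ riAut(k): |domC(ψ∘φ)| ≥ max(|domC(φ)|, |domC(ψ)|), where ψ∘φ denotes the composition of partial maps (which again lies in riAut(k)). -/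
/-- A right ideal homomorphism (as a partial function): `φ(x·w) = φ(x)·w`. -/
def IsRIH {k : ℕ} (φ : Word k →. Word k) : Prop :=
  ∀ x y, y ∈ φ x → ∀ w : Word k, (y ++ w) ∈ φ (x ++ w)

/-- Membership in `riAut(k)`: an injective right ideal homomorphism whose
domain and image are finitely generated essential right ideals. -/
def IsRIAut {k : ℕ} (φ : Word k →. Word k) : Prop :=
  IsRIH φ ∧ (∀ x₁ x₂ y, y ∈ φ x₁ → y ∈ φ x₂ → x₁ = x₂) ∧
  FinGenIdeal φ.Dom ∧ EssentialIdeal φ.Dom ∧ FinGenIdeal φ.ran ∧ EssentialIdeal φ.ran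

/-- The domain code of `φ`: the finite maximal prefix code generating `Dom(φ)`. -/
def domC {k : ℕ} (φ : Word k →. Word k) : Set (Word k) := minGen φ.Dom

/-- The strict dictionary order on words (prefix order on comparable words,
first-difference order otherwise). -/
def dictLt {k : ℕ} (u v : Word k) : Prop := List.Lex (· < ·) u v

/-- The dictionary order on words. -/
def dictLe {k : ℕ} (u v : Word k) : Prop := u = v ∨ dictLt u v

/-- Membership in `riAut_dict(k)`: elements of `riAut(k)` preserving the dictionary order. -/
def IsRIAutDict {k : ℕ} (φ : Word k →. Word k) : Prop :=
  IsRIAut φ ∧ ∀ x₁ x₂ y₁ y₂, y₁ ∈ φ x₁ → y₂ ∈ φ x₂ → dictLe x₁ x₂ → dictLe y₁ y₂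

namespace S3Aux

variable {k : ℕ}

lemma genIdeal_rightIdeal (C : Set (Word k)) : RightIdeal (genIdeal C) := by
  rintro x ⟨c, hc, hp⟩ w
  exact ⟨c, hc, hp.trans (List.prefix_append x w)⟩

lemma subset_genIdeal (C : Set (Word k)) : C ⊆ genIdeal C :=
  fun c hc => ⟨c, hc, List.prefix_rfl⟩

lemma exists_minGen_prefix_aux {R : Set (Word k)} :
    ∀ n (x : Word k), x.length ≤ n → x ∈ R → ∃ p ∈ minGen R, p <+: x := by
  intro n
  induction n with
  | zero =>
    intro x hlen hx
    refine ⟨x, ⟨hx, ?_⟩, List.prefix_rfl⟩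
    intro y hy hyx
    have := hyx.length_le
    have hx0 : x.length = 0 := Nat.le_zero.mp hlen
    have hy0 : y.length = 0 := by omega
    rw [List.length_eq_zero_iff.mp hx0, List.length_eq_zero_iff.mp hy0]
  | succ n ih =>
    intro x hlen hx
    by_cases h : ∀ y ∈ R, y <+: x → y = x
    · exact ⟨x, ⟨hx, h⟩, List.prefix_rfl⟩
    · push_neg at h
      obtain ⟨y, hyR, hyx, hne⟩ := h
      have hlt : y.length < x.length :=
        lt_of_le_of_ne hyx.length_le (fun hl => hne (hyx.eq_of_length hl))
      obtain ⟨p, hp, hpy⟩ := ih y (by omega) hyR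
      exact ⟨p, hp, hpy.trans hyx⟩

lemma exists_minGen_prefix {R : Set (Word k)} (x : Word k) (hx : x ∈ R) :
    ∃ p ∈ minGen R, p <+: x :=
  exists_minGen_prefix_aux x.length x le_rfl hx

lemma minGen_subset_self (R : Set (Word k)) : minGen R ⊆ R := fun _ hx => hx.1

lemma minGen_subset {C : Set (Word k)} : minGen (genIdeal C) ⊆ C := by
  rintro x ⟨hx, hmin⟩
  obtain ⟨c, hc, hp⟩ := hx
  have hcx := hmin c (subset_genIdeal C hc) hp
  rwa [← hcx]

lemma rightIdeal_eq_genIdeal_minGen {R : Set (Word k)} (hR : RightIdeal R) :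
    R = genIdeal (minGen R) := by
  ext x
  constructor
  · intro hx
    obtain ⟨p, hp, hpre⟩ := exists_minGen_prefix x hx
    exact ⟨p, hp, hpre⟩
  · rintro ⟨p, ⟨hpR, _⟩, w, rfl⟩
    exact hR p hpR w

lemma minGen_prefixCode (R : Set (Word k)) : PrefixCode (minGen R) := by
  rintro u ⟨huR, _⟩ v ⟨hvR, hvmin⟩ huv
  exact hvmin u huR huv

lemma minGen_genIdeal_of_prefixCode {P : Set (Word k)} (hP : PrefixCode P) :
    minGen (genIdeal P) = P := by
  apply Set.Subset.antisymm minGen_subset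
  intro p hp
  refine ⟨subset_genIdeal P hp, ?_⟩
  rintro y ⟨q, hq, hqy⟩ hyp
  have hqp : q <+: p := hqy.trans hyp
  have hqeq := hP q hq p hp hqp
  subst hqeq
  exact hyp.eq_of_length (le_antisymm hyp.length_le hqy.length_le)

lemma minGen_finite {R : Set (Word k)} (h : FinGenIdeal R) : (minGen R).Finite := by
  obtain ⟨C, hC, rfl⟩ := h
  exact hC.subset minGen_subset

lemma dom_rightIdeal {ν : Word k →. Word k} (hν : IsRIH ν) : RightIdeal ν.Dom := by
  intro x hx w
  rw [PFun.mem_dom] at hx ⊢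
  obtain ⟨y, hy⟩ := hx
  exact ⟨y ++ w, hν x y hy w⟩

lemma ran_rightIdeal {ν : Word k →. Word k} (hν : IsRIH ν) : RightIdeal ν.ran := by
  rintro z ⟨x, hz⟩ w
  exact ⟨x ++ w, hν x z hz w⟩

open Classical in
noncomputable def pget (ν : Word k →. Word k) (x : Word k) : Word k :=
  if h : (ν x).Dom then (ν x).get h else []

lemma pget_mem {ν : Word k →. Word k} {x : Word k} (hx : x ∈ ν.Dom) : pget ν x ∈ ν x := by
  have hx' : (ν x).Dom := hx
  simp only [pget, dif_pos hx']
  exact Part.get_mem hx'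

lemma ran_eq_genIdeal {ν : Word k →. Word k} (hν : IsRIH ν) :
    ν.ran = genIdeal (pget ν '' minGen ν.Dom) := by
  ext y
  constructor
  · rintro ⟨x, hyx⟩
    have hx : x ∈ ν.Dom := (PFun.mem_dom _ _).mpr ⟨y, hyx⟩
    obtain ⟨p, hp, w, rfl⟩ := exists_minGen_prefix x hx
    have h1 : pget ν p ++ w ∈ ν (p ++ w) := hν p _ (pget_mem hp.1) w
    have hy : y = pget ν p ++ w := Part.mem_unique hyx h1
    exact ⟨pget ν p, ⟨p, hp, rfl⟩, hy ▸ ⟨w, rfl⟩⟩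
  · rintro ⟨q, ⟨p, hp, rfl⟩, w, rfl⟩
    exact ⟨p ++ w, hν p _ (pget_mem hp.1) w⟩

lemma ncard_minGen_le {R R' : Set (Word k)} (hsub : R' ⊆ R)
    (hess : EssentialIdeal R') (hfin : (minGen R').Finite) :
    (minGen R).ncard ≤ (minGen R').ncard := by
  have key : ∀ c ∈ minGen R, ∃ p ∈ minGen R', c <+: p := by
    intro c hc
    obtain ⟨z, hzR', hzI⟩ :=
      hess (genIdeal {c}) (genIdeal_rightIdeal _) ⟨c, subset_genIdeal _ rfl⟩
    obtain ⟨c', hc', hcz⟩ := hzI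
    rw [Set.mem_singleton_iff] at hc'
    rw [hc'] at hcz
    obtain ⟨p, hp, hpz⟩ := exists_minGen_prefix z hzR'
    rcases List.prefix_or_prefix_of_prefix hpz hcz with h | h
    · have hpc : p = c := hc.2 p (hsub (minGen_subset_self _ hp)) h
      exact ⟨p, hp, by rw [hpc]⟩
    · exact ⟨p, hp, h⟩
  have key' : ∀ c : Word k, ∃ p, c ∈ minGen R → p ∈ minGen R' ∧ c <+: p := by
    intro c
    by_cases h : c ∈ minGen R
    · obtain ⟨p, hp, hcp⟩ := key c h
      exact ⟨p, fun _ => ⟨hp, hcp⟩⟩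
    · exact ⟨[], fun hc => absurd hc h⟩
  choose f hf using key'
  refine Set.ncard_le_ncard_of_injOn f (fun c hc => (hf c hc).1) ?_ hfin
  intro c1 h1 c2 h2 heq
  rcases List.prefix_or_prefix_of_prefix (hf c1 h1).2 (heq.symm ▸ (hf c2 h2).2) with h | h
  · exact minGen_prefixCode R c1 h1 c2 h2 h
  · exact (minGen_prefixCode R c2 h2 c1 h1 h).symm

lemma ncard_minGen_ran {ν : Word k →. Word k} (hν : IsRIH ν)
    (hinj : ∀ x₁ x₂ y, y ∈ ν x₁ → y ∈ ν x₂ → x₁ = x₂) :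
    (minGen ν.ran).ncard = (minGen ν.Dom).ncard := by
  have hpc : PrefixCode (pget ν '' minGen ν.Dom) := by
    rintro u ⟨c1, h1, rfl⟩ v ⟨c2, h2, rfl⟩ hpre
    obtain ⟨w, hw⟩ := hpre
    have hmem : pget ν c1 ++ w ∈ ν (c1 ++ w) := hν c1 _ (pget_mem h1.1) w
    rw [hw] at hmem
    have hcw : c1 ++ w = c2 := hinj _ _ _ hmem (pget_mem h2.1)
    have hc12 : c1 = c2 := minGen_prefixCode _ c1 h1 c2 h2 ⟨w, hcw⟩
    rw [hc12]
  rw [ran_eq_genIdeal hν, minGen_genIdeal_of_prefixCode hpc]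
  apply Set.ncard_image_of_injOn
  intro c1 h1 c2 h2 heq
  exact hinj c1 c2 _ (pget_mem h1.1) (by rw [heq]; exact pget_mem h2.1)

lemma mem_comp_iff {φ ψ : Word k →. Word k} {x z : Word k} :
    z ∈ (ψ.comp φ) x ↔ ∃ y, y ∈ φ x ∧ z ∈ ψ y := by
  simp [PFun.comp_apply, Part.mem_bind_iff]
  exact Part.mem_bind_iff

lemma dom_comp_iff {φ ψ : Word k →. Word k} {x : Word k} :
    x ∈ (ψ.comp φ).Dom ↔ ∃ y, y ∈ φ x ∧ y ∈ ψ.Dom := by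
  rw [PFun.mem_dom]
  constructor
  · rintro ⟨z, hz⟩
    obtain ⟨y, hy, hzy⟩ := mem_comp_iff.mp hz
    exact ⟨y, hy, (PFun.mem_dom _ _).mpr ⟨z, hzy⟩⟩
  · rintro ⟨y, hy, hyd⟩
    obtain ⟨z, hz⟩ := (PFun.mem_dom _ _).mp hyd
    exact ⟨z, mem_comp_iff.mpr ⟨y, hy, hz⟩⟩

end S3Aux

open S3Aux in
/-- For `φ, ψ ∈ riAut(k)`, the composition `ψ∘φ` lies again in
`riAut(k)` and `|domC(ψ∘φ)| ≥ max(|domC(φ)|, |domC(ψ)|)`. -/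
theorem statement3 (k : ℕ) (hk : 2 ≤ k) (φ ψ : Word k →. Word k)
    (hφ : IsRIAut φ) (hψ : IsRIAut ψ) :
    IsRIAut (ψ.comp φ) ∧
    max (domC φ).ncard (domC ψ).ncard ≤ (domC (ψ.comp φ)).ncard := by
  set χ := ψ.comp φ with hχdef
  obtain ⟨hφRIH, hφinj, hφdfg, hφdess, hφrfg, hφress⟩ := hφ
  obtain ⟨hψRIH, hψinj, hψdfg, hψdess, hψrfg, hψress⟩ := hψ
  -- χ is a right-ideal homomorphism
  have hχRIH : IsRIH χ := by
    intro x z hz w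
    rw [hχdef, mem_comp_iff] at hz ⊢
    obtain ⟨y, hy, hzy⟩ := hz
    exact ⟨y ++ w, hφRIH x y hy w, hψRIH y z hzy w⟩
  -- χ is injective
  have hχinj : ∀ x₁ x₂ y, y ∈ χ x₁ → y ∈ χ x₂ → x₁ = x₂ := by
    intro x1 x2 z h1 h2
    rw [hχdef, mem_comp_iff] at h1 h2
    obtain ⟨y1, hy1, hz1⟩ := h1
    obtain ⟨y2, hy2, hz2⟩ := h2
    have hyy : y1 = y2 := hψinj y1 y2 z hz1 hz2
    subst hyy
    exact hφinj x1 x2 y1 hy1 hy2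
  have hχdomRI : RightIdeal χ.Dom := dom_rightIdeal hχRIH
  have hχdomsub : χ.Dom ⊆ φ.Dom := by
    intro x hx
    obtain ⟨y, hy, _⟩ := dom_comp_iff.mp hx
    exact (PFun.mem_dom _ _).mpr ⟨y, hy⟩
  have hχransub : χ.ran ⊆ ψ.ran := by
    rintro z ⟨x, hz⟩
    obtain ⟨y, _, hzy⟩ := mem_comp_iff.mp hz
    exact ⟨y, hzy⟩
  -- Dom χ is essential
  have hχdess : EssentialIdeal χ.Dom := by
    intro I hI hIne
    obtain ⟨x, hx⟩ := hφdess I hI hIne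
    obtain ⟨z, hz⟩ := hψdess (genIdeal {pget φ x}) (genIdeal_rightIdeal _)
      ⟨pget φ x, subset_genIdeal _ rfl⟩
    obtain ⟨y', hy', hpre⟩ := hz.2
    rw [Set.mem_singleton_iff] at hy'
    rw [hy'] at hpre
    obtain ⟨w, rfl⟩ := hpre
    refine ⟨x ++ w, ?_, hI x hx.2 w⟩
    exact dom_comp_iff.mpr ⟨pget φ x ++ w, hφRIH x _ (pget_mem hx.1) w, hz.1⟩
  -- ran χ is essential
  have hχress : EssentialIdeal χ.ran := by
    intro I hI hIne
    obtain ⟨t, ht⟩ := hψress I hI hIne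
    obtain ⟨y, hty⟩ := ht.1
    obtain ⟨s, hs⟩ := hφress (genIdeal {y}) (genIdeal_rightIdeal _)
      ⟨y, subset_genIdeal _ rfl⟩
    obtain ⟨y', hy', hpre⟩ := hs.2
    rw [Set.mem_singleton_iff] at hy'
    rw [hy'] at hpre
    obtain ⟨w, rfl⟩ := hpre
    obtain ⟨x, hx⟩ := hs.1
    refine ⟨t ++ w, ⟨x, ?_⟩, hI t ht.2 w⟩
    exact mem_comp_iff.mpr ⟨y ++ w, hx, hψRIH y t hty w⟩
  -- minGen of Dom χ is finite
  have hχdomfin : (minGen χ.Dom).Finite := by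
    have hCfin : (minGen φ.Dom).Finite := minGen_finite hφdfg
    have hDfin : (minGen ψ.Dom).Finite := minGen_finite hψdfg
    have hsub : minGen χ.Dom ⊆ minGen φ.Dom ∪
        (fun p : Word k × Word k => p.1 ++ p.2.drop (pget φ p.1).length) ''
          ((minGen φ.Dom) ×ˢ (minGen ψ.Dom)) := by
      rintro x ⟨hx, hmin⟩
      have hxφ : x ∈ φ.Dom := hχdomsub hx
      obtain ⟨c, hc, w, rfl⟩ := exists_minGen_prefix x hxφ
      obtain ⟨y, hy, hyDom⟩ := dom_comp_iff.mp hx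
      have hy' : y = pget φ c ++ w := Part.mem_unique hy (hφRIH c _ (pget_mem hc.1) w)
      subst hy'
      obtain ⟨d, hd, hdpre⟩ := exists_minGen_prefix _ hyDom
      rcases List.prefix_or_prefix_of_prefix hdpre (List.prefix_append _ w) with h | h
      · -- d <+: pget φ c : then c itself is in Dom χ
        obtain ⟨w', hww⟩ := h
        have hcDomψ : pget φ c ∈ ψ.Dom := by
          rw [← hww]; exact dom_rightIdeal hψRIH d hd.1 w'
        have hcDom : c ∈ χ.Dom := dom_comp_iff.mpr ⟨pget φ c, pget_mem hc.1, hcDomψ⟩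
        have hcx : c = c ++ w := hmin c hcDom ⟨w, rfl⟩
        rw [← hcx]
        exact Or.inl hc
      · -- pget φ c <+: d : then x = c ++ (tail of d)
        obtain ⟨w', rfl⟩ := h
        have hw'w : w' <+: w := by
          obtain ⟨t, ht⟩ := hdpre
          rw [List.append_assoc] at ht
          exact ⟨t, List.append_cancel_left ht⟩
        have hcd : c ++ w' ∈ χ.Dom :=
          dom_comp_iff.mpr ⟨pget φ c ++ w', hφRIH c _ (pget_mem hc.1) w', hd.1⟩
        have hcwpre : c ++ w' <+: c ++ w := by
          obtain ⟨t, rfl⟩ := hw'w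
          exact ⟨t, by rw [List.append_assoc]⟩
        have heq : c ++ w' = c ++ w := hmin _ hcd hcwpre
        refine Or.inr ⟨(c, pget φ c ++ w'), ⟨hc, hd⟩, ?_⟩
        simp only []
        rw [List.drop_left, heq]
    exact (hCfin.union ((hCfin.prod hDfin).image _)).subset hsub
  have hχdfg : FinGenIdeal χ.Dom :=
    ⟨minGen χ.Dom, hχdomfin, rightIdeal_eq_genIdeal_minGen hχdomRI⟩
  have hχrfg : FinGenIdeal χ.ran :=
    ⟨pget χ '' minGen χ.Dom, hχdomfin.image _, ran_eq_genIdeal hχRIH⟩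
  have hχranfin : (minGen χ.ran).Finite := by
    have := ran_eq_genIdeal hχRIH
    rw [this]
    exact (hχdomfin.image (pget χ)).subset minGen_subset
  refine ⟨⟨hχRIH, hχinj, hχdfg, hχdess, hχrfg, hχress⟩, ?_⟩
  rw [max_le_iff]
  constructor
  · exact ncard_minGen_le hχdomsub hχdess hχdomfin
  · calc (minGen ψ.Dom).ncard
        = (minGen ψ.ran).ncard := (ncard_minGen_ran hψRIH hψinj).symm
      _ ≤ (minGen χ.ran).ncard := ncard_minGen_le hχransub hχress hχranfin
      _ = (minGen χ.Dom).ncard := ncard_minGen_ran hχRIH hχinj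
end

section
/- For all φ₁, φ₂ ∈ riAut(k): there exist β, α ∈ riAut(k) with φ₂ = β∘φ₁∘α if and only if |domC(φ₂)| ≥ |domC(φ₁)|. The same equivalence holds with riAut_dict(k) in place of riAut(k) (with β, α required to lie in riAut_dict(k)). -/
namespace S4
variable {k : ℕ}

lemma pc_unique {C : Set (Word k)} (hC : PrefixCode C) {c c' x : Word k}
    (hc : c ∈ C) (hc' : c' ∈ C) (h1 : c <+: x) (h2 : c' <+: x) : c = c' := by
  rcases List.prefix_or_prefix_of_prefix h1 h2 with h | h
  · exact hC c hc c' hc' h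
  · exact (hC c' hc' c hc h).symm

def Complete (C : Set (Word k)) : Prop := ∀ w : Word k, ∃ c ∈ C, c <+: w ∨ w <+: c

lemma genIdeal_rightIdeal (C : Set (Word k)) : RightIdeal (genIdeal C) := by
  rintro x ⟨c, hc, t, rfl⟩ w
  exact ⟨c, hc, t ++ w, by simp⟩

lemma subset_genIdeal {C : Set (Word k)} : C ⊆ genIdeal C :=
  fun c hc => ⟨c, hc, List.prefix_refl c⟩

lemma complete_essential {C : Set (Word k)} (h : Complete C) :
    EssentialIdeal (genIdeal C) := by
  rintro I hI ⟨w, hw⟩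
  obtain ⟨c, hc, hcw | hwc⟩ := h w
  · exact ⟨w, ⟨c, hc, hcw⟩, hw⟩
  · obtain ⟨t, rfl⟩ := hwc
    exact ⟨w ++ t, subset_genIdeal hc, hI w hw t⟩

lemma essential_complete {C : Set (Word k)} (h : EssentialIdeal (genIdeal C)) :
    Complete C := by
  intro w
  obtain ⟨x, ⟨c, hc, hcx⟩, hwx⟩ := h (genIdeal {w}) (genIdeal_rightIdeal _)
    ⟨w, subset_genIdeal rfl⟩
  obtain ⟨c', rfl, hwx⟩ := hwx
  rcases List.prefix_or_prefix_of_prefix hcx hwx with h' | h'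
  · exact ⟨c, hc, Or.inl h'⟩
  · exact ⟨c, hc, Or.inr h'⟩

lemma minGen_prefixCode (R : Set (Word k)) : PrefixCode (minGen R) :=
  fun _ hu v hv huv => hv.2 _ hu.1 huv

/-- every element of `R` has a prefix in `minGen R`. -/
lemma exists_minGen_prefix {R : Set (Word k)} {x : Word k} (hx : x ∈ R) :
    ∃ m ∈ minGen R, m <+: x := by
  obtain ⟨n, hn⟩ : ∃ n, x.length = n := ⟨_, rfl⟩
  induction n using Nat.strong_induction_on generalizing x with
  | _ n ih =>
    by_cases hmin : ∀ y ∈ R, y <+: x → y = x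
    · exact ⟨x, ⟨hx, hmin⟩, List.prefix_refl x⟩
    · push_neg at hmin
      obtain ⟨y, hyR, hyx, hne⟩ := hmin
      have hlt : y.length < n := by
        subst hn
        exact lt_of_le_of_ne (List.IsPrefix.length_le hyx)
          (fun h => hne (List.IsPrefix.eq_of_length hyx h))
      obtain ⟨m, hm, hmy⟩ := ih y.length hlt hyR rfl
      exact ⟨m, hm, hmy.trans hyx⟩

lemma genIdeal_minGen {R : Set (Word k)} (hR : RightIdeal R) :
    R = genIdeal (minGen R) := by
  ext x
  constructor
  · intro hx
    obtain ⟨m, hm, hmx⟩ := exists_minGen_prefix hx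
    exact ⟨m, hm, hmx⟩
  · rintro ⟨m, hm, t, rfl⟩
    exact hR m hm.1 t

lemma minGen_subset_gen {C : Set (Word k)} : minGen (genIdeal C) ⊆ C := by
  rintro m ⟨hm, hmin⟩
  obtain ⟨c, hc, hcm⟩ := hm
  have := hmin c (subset_genIdeal hc) hcm
  rwa [← this]


open Classical in
noncomputable def pget (φ : Word k →. Word k) (x : Word k) : Word k :=
  if h : (φ x).Dom then (φ x).get h else []

lemma pget_mem {φ : Word k →. Word k} {x : Word k} (h : x ∈ φ.Dom) :
    pget φ x ∈ φ x := by
  have h' : (φ x).Dom := h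
  unfold pget
  rw [dif_pos h']
  exact Part.get_mem h'

lemma mem_dom_of_mem {φ : Word k →. Word k} {x y : Word k} (h : y ∈ φ x) : x ∈ φ.Dom :=
  (PFun.mem_dom _ _).2 ⟨y, h⟩

lemma eq_pget_of_mem {φ : Word k →. Word k} {x y : Word k} (h : y ∈ φ x) :
    y = pget φ x :=
  Part.mem_unique h (pget_mem (mem_dom_of_mem h))

lemma dom_rightIdeal {φ : Word k →. Word k} (h : IsRIH φ) : RightIdeal φ.Dom := by
  rintro x hx w
  exact (PFun.mem_dom _ _).2 ⟨_, h x _ (pget_mem hx) w⟩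

lemma ran_rightIdeal {φ : Word k →. Word k} (h : IsRIH φ) : RightIdeal φ.ran := by
  rintro y ⟨x, hx⟩ w
  exact ⟨x ++ w, h x y hx w⟩

lemma pget_append {φ : Word k →. Word k} (hφ : IsRIH φ) {x : Word k} (hx : x ∈ φ.Dom)
    (w : Word k) : pget φ (x ++ w) = pget φ x ++ w :=
  (eq_pget_of_mem (hφ x _ (pget_mem hx) w)).symm

/-- Basic properties of the domain code of an element of `riAut(k)`. -/
lemma domC_spec {φ : Word k →. Word k} (h : IsRIAut φ) :
    (domC φ).Finite ∧ PrefixCode (domC φ) ∧ Complete (domC φ) ∧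
      φ.Dom = genIdeal (domC φ) ∧ domC φ ⊆ φ.Dom := by
  obtain ⟨hrih, hinj, ⟨C, hCfin, hCgen⟩, hess, _, _⟩ := h
  have hgen : φ.Dom = genIdeal (domC φ) := genIdeal_minGen (dom_rightIdeal hrih)
  refine ⟨?_, minGen_prefixCode _, ?_, hgen, fun c hc => hc.1⟩
  · exact hCfin.subset (by rw [domC, hCgen]; exact minGen_subset_gen)
  · exact essential_complete (hgen ▸ hess)

lemma pget_injOn {φ : Word k →. Word k} (h : IsRIAut φ) :
    Set.InjOn (pget φ) φ.Dom := by
  intro x hx y hy hxy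
  exact h.2.1 x y _ (pget_mem hx) (hxy ▸ pget_mem hy)

/-- The image of a prefix code inside the domain under an injective RIH is a prefix code. -/
lemma prefixCode_pimage {φ : Word k →. Word k} (h : IsRIAut φ) {C : Set (Word k)}
    (hC : PrefixCode C) (hsub : C ⊆ φ.Dom) : PrefixCode (pget φ '' C) := by
  rintro _ ⟨c, hc, rfl⟩ _ ⟨c', hc', rfl⟩ ⟨w, hw⟩
  have h1 : pget φ c ++ w ∈ φ (c ++ w) := h.1 c _ (pget_mem (hsub hc)) w
  have h2 : pget φ c' ∈ φ c' := pget_mem (hsub hc')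
  have : c' = c ++ w := h.2.1 c' (c ++ w) _ h2 (hw ▸ h1)
  have : c = c' := hC c hc c' hc' ⟨w, this.symm⟩
  rw [this]

/-- The range of `φ` is generated by the image of any generating code of the domain. -/
lemma ran_eq_genIdeal_pimage {φ : Word k →. Word k} (hrih : IsRIH φ) {C : Set (Word k)}
    (hgen : φ.Dom = genIdeal C) : φ.ran = genIdeal (pget φ '' C) := by
  have hsub : C ⊆ φ.Dom := by rw [hgen]; exact subset_genIdeal
  ext y
  constructor
  · rintro ⟨x, hx⟩
    have hxd : x ∈ φ.Dom := (PFun.mem_dom _ _).2 ⟨y, hx⟩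
    obtain ⟨c, hc, w, rfl⟩ := hgen ▸ hxd
    have : pget φ c ++ w ∈ φ (c ++ w) := hrih c _ (pget_mem (hsub hc)) w
    have hy : y = pget φ c ++ w := Part.mem_unique hx this
    exact ⟨pget φ c, ⟨c, hc, rfl⟩, w, hy.symm⟩
  · rintro ⟨_, ⟨c, hc, rfl⟩, w, rfl⟩
    exact ⟨c ++ w, hrih c _ (pget_mem (hsub hc)) w⟩

/-- Image completeness: if `genIdeal C ⊆ Dom φ`, `genIdeal C` essential, `ran φ` essential,
then the image code is complete. -/
lemma complete_pimage {φ : Word k →. Word k} (hφ : IsRIAut φ) {C : Set (Word k)}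
    (hsub : genIdeal C ⊆ φ.Dom) (hCe : EssentialIdeal (genIdeal C)) :
    Complete (pget φ '' C) := by
  intro w
  obtain ⟨t, ht, c₀, hc₀, hwt0⟩ :=
    hφ.2.2.2.2.2 (genIdeal {w}) (genIdeal_rightIdeal _) ⟨w, subset_genIdeal rfl⟩
  obtain rfl : w = c₀ := hc₀.symm
  obtain ⟨x, hxt⟩ := ht
  obtain ⟨z, hz, x', hx', hxz⟩ := hCe (genIdeal {x}) (genIdeal_rightIdeal _)
    ⟨x, subset_genIdeal rfl⟩
  obtain rfl : x = x' := hx'.symm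
  obtain ⟨v, rfl⟩ := hxz
  obtain ⟨c, hc, s, hcs⟩ := hz
  have hcd : c ∈ φ.Dom := hsub (subset_genIdeal hc)
  have h1 : t ++ v ∈ φ (x ++ v) := hφ.1 x t hxt v
  have h2 : pget φ c ++ s ∈ φ (c ++ s) := hφ.1 c _ (pget_mem hcd) s
  rw [hcs] at h2
  have heq : t ++ v = pget φ c ++ s := Part.mem_unique h1 h2
  have hwt : w <+: t ++ v := hwt0.trans (List.prefix_append t v)
  have hpc : pget φ c <+: t ++ v := heq ▸ List.prefix_append _ s
  exact ⟨pget φ c, ⟨c, hc, rfl⟩, (List.prefix_or_prefix_of_prefix hpc hwt).imp id id⟩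


/-! ### Lexicographic order lemmas -/

lemma dictLt_iff_lt {u v : Word k} : dictLt u v ↔ u < v := Iff.rfl

lemma dictLe_iff_le {u v : Word k} : dictLe u v ↔ u ≤ v := by
  rw [le_iff_lt_or_eq, dictLe]
  constructor
  · rintro (rfl | h); exacts [Or.inr rfl, Or.inl h]
  · rintro (h | rfl); exacts [Or.inr h, Or.inl rfl]

lemma lex_append_right_iff (u w w' : Word k) :
    List.Lex (· < ·) (u ++ w) (u ++ w') ↔ List.Lex (· < ·) w w' := by
  induction u with
  | nil => rfl
  | cons a u ih => simpa [List.cons_append, List.cons_lex_cons_iff] using ih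

lemma lex_append_of_incomp {u v : Word k} (h : ¬ u <+: v) (h' : ¬ v <+: u)
    (hlt : List.Lex (· < ·) u v) (w w' : Word k) :
    List.Lex (· < ·) (u ++ w) (v ++ w') := by
  induction hlt with
  | nil => exact absurd (List.nil_prefix) h
  | @rel a l₁ b l₂ hab => exact List.Lex.rel hab
  | @cons a l₁ l₂ hlex ih =>
    simp only [List.cons_prefix_cons, true_and] at h h'
    exact List.Lex.cons (ih h h')

lemma incomp_of_prefixCode {C : Set (Word k)} (hC : PrefixCode C) {u v : Word k}
    (hu : u ∈ C) (hv : v ∈ C) (hne : u ≠ v) : ¬ u <+: v ∧ ¬ v <+: u :=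
  ⟨fun h => hne (hC u hu v hv h), fun h => hne ((hC v hv u hu h).symm)⟩

lemma lex_of_lex_append {u v : Word k} (h : ¬ u <+: v) (h' : ¬ v <+: u)
    {w w' : Word k} (hlt : List.Lex (· < ·) (u ++ w) (v ++ w')) :
    List.Lex (· < ·) u v := by
  rcases lt_trichotomy u v with hlt' | rfl | hlt'
  · exact hlt'
  · exact absurd (List.prefix_refl u) h
  · exact absurd (lex_append_of_incomp h' h hlt' w' w)
      (asymm (show (u ++ w) < (v ++ w') from hlt))

/-! ### The canonical extension of a map on a prefix code to a right ideal morphism -/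

open Classical in
noncomputable def extMap (C : Set (Word k)) (f : Word k → Word k) : Word k →. Word k :=
  fun x => ⟨∃ c ∈ C, c <+: x, fun h => f h.choose ++ x.drop h.choose.length⟩

lemma mem_extMap_iff {C : Set (Word k)} (hC : PrefixCode C) {f : Word k → Word k}
    {x y : Word k} :
    y ∈ extMap C f x ↔ ∃ c ∈ C, ∃ w, x = c ++ w ∧ y = f c ++ w := by
  constructor
  · rintro ⟨h, rfl⟩
    obtain ⟨hc, hcx⟩ := h.choose_spec
    exact ⟨h.choose, hc, x.drop h.choose.length,
      (List.prefix_iff_eq_append.1 hcx).symm, rfl⟩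
  · rintro ⟨c, hc, w, rfl, rfl⟩
    have h : ∃ c' ∈ C, c' <+: c ++ w := ⟨c, hc, List.prefix_append c w⟩
    refine ⟨h, ?_⟩
    obtain ⟨hc', hcx'⟩ := h.choose_spec
    have hcc : h.choose = c := pc_unique hC hc' hc hcx' (List.prefix_append c w)
    show f h.choose ++ (c ++ w).drop h.choose.length = f c ++ w
    rw [hcc, List.drop_left]

lemma extMap_dom (C : Set (Word k)) (f : Word k → Word k) :
    (extMap C f).Dom = genIdeal C := rfl

lemma extMap_rih {C : Set (Word k)} (hC : PrefixCode C) (f : Word k → Word k) :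
    IsRIH (extMap C f) := by
  intro x y hy w
  rw [mem_extMap_iff hC] at hy ⊢
  obtain ⟨c, hc, v, rfl, rfl⟩ := hy
  exact ⟨c, hc, v ++ w, by simp⟩

lemma extMap_ran {C : Set (Word k)} (hC : PrefixCode C) (f : Word k → Word k) :
    (extMap C f).ran = genIdeal (f '' C) := by
  ext y
  constructor
  · rintro ⟨x, hx⟩
    rw [mem_extMap_iff hC] at hx
    obtain ⟨c, hc, w, rfl, rfl⟩ := hx
    exact ⟨f c, ⟨c, hc, rfl⟩, w, rfl⟩
  · rintro ⟨_, ⟨c, hc, rfl⟩, w, rfl⟩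
    exact ⟨c ++ w, (mem_extMap_iff hC).2 ⟨c, hc, w, rfl, rfl⟩⟩

/-- The extension of an injective map between complete prefix codes is in `riAut(k)`. -/
lemma extMap_riAut {C : Set (Word k)} {f : Word k → Word k}
    (hCfin : C.Finite) (hCpc : PrefixCode C) (hCco : Complete C)
    (hDpc : PrefixCode (f '' C)) (hDco : Complete (f '' C)) (hinj : Set.InjOn f C) :
    IsRIAut (extMap C f) := by
  refine ⟨extMap_rih hCpc f, ?_, ?_, ?_, ?_, ?_⟩
  · intro x₁ x₂ y h1 h2
    rw [mem_extMap_iff hCpc] at h1 h2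
    obtain ⟨c₁, hc₁, w₁, rfl, rfl⟩ := h1
    obtain ⟨c₂, hc₂, w₂, rfl, heq⟩ := h2
    have hp1 : f c₁ <+: f c₁ ++ w₁ := List.prefix_append _ _
    have hp2 : f c₂ <+: f c₁ ++ w₁ := heq.symm ▸ List.prefix_append (f c₂) w₂
    have hcc : f c₁ = f c₂ := pc_unique hDpc ⟨c₁, hc₁, rfl⟩ ⟨c₂, hc₂, rfl⟩ hp1 hp2
    obtain rfl : c₁ = c₂ := hinj hc₁ hc₂ hcc
    rw [List.append_cancel_left heq]
  · exact ⟨C, hCfin, extMap_dom C f⟩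
  · rw [extMap_dom]; exact complete_essential hCco
  · exact ⟨f '' C, hCfin.image f, extMap_ran hCpc f⟩
  · rw [extMap_ran hCpc]; exact complete_essential hDco

/-- The extension of a dict-monotone injective map preserves the dictionary order. -/
lemma extMap_dict {C : Set (Word k)} {f : Word k → Word k}
    (hCpc : PrefixCode C) (hDpc : PrefixCode (f '' C))
    (hmono : ∀ c ∈ C, ∀ c' ∈ C, dictLt c c' → dictLt (f c) (f c')) :
    ∀ x₁ x₂ y₁ y₂, y₁ ∈ extMap C f x₁ → y₂ ∈ extMap C f x₂ →
      dictLe x₁ x₂ → dictLe y₁ y₂ := by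
  intro x₁ x₂ y₁ y₂ h1 h2 hle
  rcases hle with rfl | hlt
  · exact Or.inl (Part.mem_unique h1 h2)
  rw [mem_extMap_iff hCpc] at h1 h2
  obtain ⟨c₁, hc₁, w₁, rfl, rfl⟩ := h1
  obtain ⟨c₂, hc₂, w₂, rfl, rfl⟩ := h2
  by_cases hcc : c₁ = c₂
  · subst hcc
    right
    have := (lex_append_right_iff c₁ w₁ w₂).1 hlt
    exact (lex_append_right_iff (f c₁) w₁ w₂).2 this
  · obtain ⟨hnp, hnp'⟩ := incomp_of_prefixCode hCpc hc₁ hc₂ hcc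
    have hcl : dictLt c₁ c₂ := lex_of_lex_append hnp hnp' hlt
    have hfl : dictLt (f c₁) (f c₂) := hmono c₁ hc₁ c₂ hc₂ hcl
    have hfne : f c₁ ≠ f c₂ := fun h => (lt_irrefl (f c₂) (show f c₂ < f c₂ from h ▸ hfl))
    obtain ⟨hq, hq'⟩ := incomp_of_prefixCode hDpc ⟨c₁, hc₁, rfl⟩ ⟨c₂, hc₂, rfl⟩ hfne
    exact Or.inr (lex_append_of_incomp hq hq' hfl w₁ w₂)


/-! ### Counting: finite complete prefix codes have size `1 + j(k-1)` -/

lemma card_complete_aux (hk : 2 ≤ k) :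
    ∀ N (C : Finset (Word k)), (∑ c ∈ C, c.length) ≤ N →
      PrefixCode (C : Set (Word k)) → Complete (C : Set (Word k)) →
      ∃ j, C.card = 1 + j * (k - 1) := by
  intro N
  induction N using Nat.strong_induction_on with
  | _ N ih =>
  intro C hsum hpc hco
  classical
  by_cases hnil : ([] : Word k) ∈ C
  · have hC1 : C = {([] : Word k)} := by
      apply Finset.eq_singleton_iff_unique_mem.2
      exact ⟨hnil, fun c hc => (hpc [] hnil c hc (List.nil_prefix)).symm⟩
    exact ⟨0, by simp [hC1]⟩
  · obtain ⟨c₀, hc₀, _⟩ := hco []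
    have hc₀' : c₀ ∈ C := hc₀
    obtain ⟨p, hp, hmax⟩ := C.exists_max_image List.length ⟨c₀, hc₀'⟩
    have hpne : p ≠ [] := fun h => hnil (h ▸ hp)
    set q := p.dropLast with hqdef
    have hqp : q ++ [p.getLast hpne] = p := List.dropLast_append_getLast hpne
    have hqlen : q.length + 1 = p.length := by
      conv_rhs => rw [← hqp]
      simp
    have hqP : q <+: p := ⟨[p.getLast hpne], hqp⟩
    have hqnotC : q ∉ C := by
      intro hqC
      have h := hpc q hqC p hp hqP
      rw [h] at hqlen; omega
    have hall : ∀ b : Fin k, q ++ [b] ∈ C := by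
      intro b
      obtain ⟨c, hc, hcle | hle⟩ := hco (q ++ [b])
      · rcases List.prefix_concat_iff.1 hcle with rfl | hcq
        · exact hc
        · exfalso
          have h := hpc c hc p hp (hcq.trans hqP)
          have := hcq.length_le
          rw [h] at this; omega
      · have h1 : (q ++ [b]).length ≤ c.length := hle.length_le
        have h2 : c.length ≤ p.length := hmax c hc
        have h3 : (q ++ [b]).length = c.length := by
          simp only [List.length_append, List.length_singleton] at h1 ⊢
          omega
        have := hle.eq_of_length h3
        rwa [← this] at hc
    have hext : ∀ c ∈ C, q <+: c → ∃ b : Fin k, c = q ++ [b] := by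
      intro c hc hqc
      have hcq : c ≠ q := fun h => hqnotC (h ▸ hc)
      have h1 : q.length < c.length :=
        lt_of_le_of_ne hqc.length_le (fun h => hcq ((hqc.eq_of_length h).symm))
      have h2 : c.length ≤ p.length := hmax c hc
      obtain ⟨t, ht⟩ := hqc
      have htlen : t.length = 1 := by
        have := congrArg List.length ht
        simp at this; omega
      match t, htlen with
      | [b], _ => exact ⟨b, ht.symm⟩
    set E : Finset (Word k) := Finset.image (fun b : Fin k => q ++ [b]) Finset.univ with hE
    have hmemE : ∀ {c : Word k}, c ∈ E ↔ ∃ b : Fin k, c = q ++ [b] := by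
      intro c
      simp only [hE, Finset.mem_image, Finset.mem_univ, true_and]
      exact ⟨fun ⟨b, hb⟩ => ⟨b, hb.symm⟩, fun ⟨b, hb⟩ => ⟨b, hb.symm⟩⟩
    have hEsub : E ⊆ C := by
      intro e he
      obtain ⟨b, rfl⟩ := hmemE.1 he
      exact hall b
    have hqinj : Function.Injective (fun b : Fin k => q ++ [b]) := by
      intro b b' h; simpa using h
    have hEcard : E.card = k := by
      rw [hE, Finset.card_image_of_injective _ hqinj, Finset.card_univ, Fintype.card_fin]
    set C' : Finset (Word k) := (C \ E) ∪ {q} with hC'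
    have hqnotCE : q ∉ C \ E := fun h => hqnotC (Finset.mem_sdiff.1 h).1
    have hnoq : ∀ {c : Word k}, c ∈ C \ E → ¬ q <+: c := by
      intro c hc h
      obtain ⟨b, rfl⟩ := hext c (Finset.mem_sdiff.1 hc).1 h
      exact (Finset.mem_sdiff.1 hc).2 (hmemE.2 ⟨b, rfl⟩)
    have hmemC' : ∀ {c : Word k}, c ∈ C' ↔ (c ∈ C ∧ c ∉ E) ∨ c = q := by
      intro c
      simp [hC', Finset.mem_sdiff]
      exact Or.comm
    have hpc' : PrefixCode (C' : Set (Word k)) := by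
      intro u hu v hv huv
      rcases hmemC'.1 hu with ⟨huC, huE⟩ | rfl <;> rcases hmemC'.1 hv with ⟨hvC, hvE⟩ | rfl
      · exact hpc u huC v hvC huv
      · exfalso
        have hup : u = p := hpc u huC p hp (huv.trans hqP)
        exact huE (hmemE.2 ⟨p.getLast hpne, by rw [hup]; exact hqp.symm⟩)
      · exact absurd huv (hnoq (Finset.mem_sdiff.2 ⟨hvC, hvE⟩))
      · rfl
    have hco' : Complete (C' : Set (Word k)) := by
      intro w
      obtain ⟨c, hc, hcw⟩ := hco w
      have hcC : c ∈ C := hc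
      by_cases hqc : q <+: c
      · obtain ⟨b, rfl⟩ := hext c hcC hqc
        refine ⟨q, hmemC'.2 (Or.inr rfl), ?_⟩
        rcases hcw with hcw | hwc
        · exact Or.inl (hqc.trans hcw)
        · rcases List.prefix_concat_iff.1 hwc with rfl | hwq
          · exact Or.inl hqc
          · exact Or.inr hwq
      · have hcE : c ∉ E := fun h => by
          obtain ⟨b, rfl⟩ := hmemE.1 h
          exact hqc (List.prefix_append q [b])
        exact ⟨c, hmemC'.2 (Or.inl ⟨hcC, hcE⟩), hcw⟩
    have hqlen' : ∑ c ∈ E, c.length = k * (q.length + 1) := by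
      rw [hE, Finset.sum_image (fun b _ b' _ h => hqinj h)]
      simp [Finset.sum_const, mul_comm]
    have hsum' : ∑ c ∈ C', c.length < ∑ c ∈ C, c.length := by
      have h1 : ∑ c ∈ C', c.length = ∑ c ∈ C \ E, c.length + q.length := by
        rw [hC', Finset.sum_union (Finset.disjoint_singleton_right.2 hqnotCE)]
        simp
      have h2 : ∑ c ∈ C \ E, c.length + ∑ c ∈ E, c.length = ∑ c ∈ C, c.length :=
        Finset.sum_sdiff hEsub
      have h3 : q.length < k * (q.length + 1) := by nlinarith
      omega
    obtain ⟨j', hj'⟩ := ih (∑ c ∈ C', c.length) (by omega) C' le_rfl hpc' hco'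
    have hcard1 : C'.card = (C \ E).card + 1 := by
      rw [hC', Finset.card_union_of_disjoint (Finset.disjoint_singleton_right.2 hqnotCE)]
      simp
    have hcard2 : (C \ E).card = C.card - k := by rw [Finset.card_sdiff_of_subset hEsub, hEcard]
    have hkC : k ≤ C.card := le_trans (le_of_eq hEcard.symm) (Finset.card_le_card hEsub)
    have hcard : C.card = C'.card + (k - 1) := by omega
    exact ⟨j' + 1, by rw [hcard, hj']; ring⟩

lemma card_complete (hk : 2 ≤ k) {C : Set (Word k)} (hfin : C.Finite)
    (hpc : PrefixCode C) (hco : Complete C) : ∃ j, C.ncard = 1 + j * (k - 1) := by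
  have h1 : (hfin.toFinset : Set (Word k)) = C := hfin.coe_toFinset
  obtain ⟨j, hj⟩ := card_complete_aux hk (∑ c ∈ hfin.toFinset, c.length) hfin.toFinset
    le_rfl (by rw [h1]; exact hpc) (by rw [h1]; exact hco)
  exact ⟨j, by rwa [Set.ncard_eq_toFinset_card C hfin]⟩


/-! ### Splitting a leaf of a complete prefix code -/

lemma split_code (hk : 2 ≤ k) {P : Set (Word k)} (hfin : P.Finite) (hpc : PrefixCode P)
    (hco : Complete P) {c : Word k} (hc : c ∈ P) :
    ∃ P' : Set (Word k), P'.Finite ∧ PrefixCode P' ∧ Complete P' ∧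
      P'.ncard = P.ncard + (k - 1) ∧ genIdeal P' ⊆ genIdeal P := by
  have hb0 : (0 : ℕ) < k := by omega
  set S : Set (Word k) := (fun b : Fin k => c ++ [b]) '' Set.univ with hS
  have hinj : Function.Injective (fun b : Fin k => c ++ [b]) := by
    intro b b' h; simpa using h
  have hnotP : ∀ b : Fin k, c ++ [b] ∉ P := by
    intro b hmem
    have := hpc c hc (c ++ [b]) hmem (List.prefix_append c [b])
    have := congrArg List.length this
    simp at this
  have hSfin : S.Finite := Set.finite_univ.image _
  refine ⟨(P \ {c}) ∪ S, ((hfin.subset Set.diff_subset).union hSfin), ?_, ?_, ?_, ?_⟩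
  · -- prefix code
    rintro u hu v hv huv
    rcases hu with ⟨huP, huc⟩ | ⟨b, -, rfl⟩ <;> rcases hv with ⟨hvP, hvc⟩ | ⟨b', -, rfl⟩
    · exact hpc u huP v hvP huv
    · rcases List.prefix_concat_iff.1 huv with rfl | huc'
      · exact absurd huP (hnotP b')
      · exact absurd (Set.mem_singleton_iff.1 (hpc u huP c hc huc' ▸ rfl)) huc
    · exfalso
      have hcv := hpc c hc v hvP ((List.prefix_append c [b]).trans huv)
      exact hvc (Set.mem_singleton_iff.2 hcv.symm)
    · have : (c ++ [b]).length = (c ++ [b']).length := by simp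
      rw [huv.eq_of_length this]
  · -- complete
    intro w
    obtain ⟨d, hd, hdw⟩ := hco w
    by_cases hdc : d = c
    · subst hdc
      rcases hdw with ⟨t, rfl⟩ | hwd
      · match t with
        | [] => exact ⟨d ++ [⟨0, hb0⟩], Or.inr ⟨⟨0, hb0⟩, trivial, rfl⟩,
            Or.inr (by simp)⟩
        | b :: ts => exact ⟨d ++ [b], Or.inr ⟨b, trivial, rfl⟩,
            Or.inl ⟨ts, by simp⟩⟩
      · exact ⟨d ++ [⟨0, hb0⟩], Or.inr ⟨⟨0, hb0⟩, trivial, rfl⟩,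
          Or.inr (hwd.trans (List.prefix_append d _))⟩
    · exact ⟨d, Or.inl ⟨hd, hdc⟩, hdw⟩
  · -- cardinality
    have hdisj : Disjoint (P \ {c}) S := by
      rw [Set.disjoint_right]
      rintro x ⟨b, -, rfl⟩ ⟨hxP, -⟩
      exact hnotP b hxP
    have hScard : S.ncard = k := by
      rw [hS, Set.ncard_image_of_injective _ hinj, Set.ncard_univ, Nat.card_eq_fintype_card,
        Fintype.card_fin]
    have hP1 : 0 < P.ncard := (Set.ncard_pos hfin).2 ⟨c, hc⟩
    rw [Set.ncard_union_eq hdisj (hfin.subset Set.diff_subset) hSfin,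
      Set.ncard_diff_singleton_of_mem hc, hScard]
    omega
  · -- ideal inclusion
    rintro x ⟨d, hd, hdx⟩
    rcases hd with ⟨hdP, -⟩ | ⟨b, -, rfl⟩
    · exact ⟨d, hdP, hdx⟩
    · exact ⟨c, hc, (List.prefix_append c [b]).trans hdx⟩

lemma refine_code (hk : 2 ≤ k) {C : Set (Word k)} (hfin : C.Finite) (hpc : PrefixCode C)
    (hco : Complete C) (j : ℕ) :
    ∃ P : Set (Word k), P.Finite ∧ PrefixCode P ∧ Complete P ∧
      P.ncard = C.ncard + j * (k - 1) ∧ genIdeal P ⊆ genIdeal C := by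
  induction j with
  | zero => exact ⟨C, hfin, hpc, hco, by simp, subset_rfl⟩
  | succ j ih =>
    obtain ⟨P, hPfin, hPpc, hPco, hPcard, hPsub⟩ := ih
    obtain ⟨c, hcP, -⟩ := hPco []
    obtain ⟨P', h1, h2, h3, h4, h5⟩ := split_code hk hPfin hPpc hPco hcP
    exact ⟨P', h1, h2, h3, by rw [h4, hPcard]; ring, h5.trans hPsub⟩

/-! ### Monotone bijections between finite sets of words of equal size -/

lemma exists_mono_bij {s t : Set (Word k)} (hs : s.Finite) (ht : t.Finite)
    (h : s.ncard = t.ncard) :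
    ∃ f : Word k → Word k, Set.InjOn f s ∧ f '' s = t ∧
      ∀ u ∈ s, ∀ v ∈ s, dictLt u v → dictLt (f u) (f v) := by
  classical
  set S := hs.toFinset with hSdef
  set T := ht.toFinset with hTdef
  have hST : T.card = S.card := by
    rw [← Set.ncard_eq_toFinset_card s hs, ← Set.ncard_eq_toFinset_card t ht, h]
  set e₁ := S.orderIsoOfFin (rfl : S.card = S.card) with he₁
  set e₂ := T.orderIsoOfFin hST with he₂
  set f : Word k → Word k := fun w => if hw : w ∈ S then (e₂ (e₁.symm ⟨w, hw⟩) : Word k) else w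
    with hf
  have hfs : ∀ {w} (hw : w ∈ S), f w = (e₂ (e₁.symm ⟨w, hw⟩) : Word k) := by
    intro w hw; simp [hf, dif_pos hw]
  have hmono : ∀ u ∈ s, ∀ v ∈ s, dictLt u v → dictLt (f u) (f v) := by
    intro u hu v hv huv
    have hu' : u ∈ S := hs.mem_toFinset.2 hu
    have hv' : v ∈ S := hs.mem_toFinset.2 hv
    rw [hfs hu', hfs hv']
    have h1 : (⟨u, hu'⟩ : {x // x ∈ S}) < ⟨v, hv'⟩ := Subtype.mk_lt_mk.2 huv
    have h2 : e₁.symm ⟨u, hu'⟩ < e₁.symm ⟨v, hv'⟩ := e₁.symm.lt_iff_lt.2 h1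
    have h3 : e₂ (e₁.symm ⟨u, hu'⟩) < e₂ (e₁.symm ⟨v, hv'⟩) := e₂.lt_iff_lt.2 h2
    exact Subtype.coe_lt_coe.2 h3
  have hinj : Set.InjOn f s := by
    intro u hu v hv hfe
    rcases lt_trichotomy u v with hlt | heq | hlt
    · exact absurd (show f v < f v from hfe ▸ hmono u hu v hv hlt) (lt_irrefl _)
    · exact heq
    · exact absurd (show f v < f v from hfe ▸ hmono v hv u hu hlt) (lt_irrefl _)
  refine ⟨f, hinj, ?_, hmono⟩
  ext y
  constructor
  · rintro ⟨x, hx, rfl⟩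
    have hx' : x ∈ S := hs.mem_toFinset.2 hx
    rw [hfs hx']
    exact ht.mem_toFinset.1 (e₂ (e₁.symm ⟨x, hx'⟩)).2
  · intro hy
    have hy' : y ∈ T := ht.mem_toFinset.2 hy
    set x := (e₁ (e₂.symm ⟨y, hy'⟩) : Word k) with hx
    have hxS : x ∈ S := (e₁ (e₂.symm ⟨y, hy'⟩)).2
    refine ⟨x, hs.mem_toFinset.1 hxS, ?_⟩
    rw [hfs hxS]
    have : (⟨x, hxS⟩ : {w // w ∈ S}) = e₁ (e₂.symm ⟨y, hy'⟩) := rfl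
    rw [this, OrderIso.symm_apply_apply, OrderIso.apply_symm_apply]


/-! ### Composition membership -/

lemma comp_mem_iff {φ ψ χ : Word k →. Word k} {x y : Word k} :
    y ∈ ((χ.comp ψ).comp φ) x ↔ ∃ z ∈ φ x, ∃ u ∈ ψ z, y ∈ χ u := by
  constructor
  · intro h
    obtain ⟨z, hz, h⟩ := Part.mem_bind_iff.1 h
    obtain ⟨u, hu, h⟩ := Part.mem_bind_iff.1 h
    exact ⟨z, hz, u, hu, h⟩
  · rintro ⟨z, hz, u, hu, h⟩
    exact Part.mem_bind_iff.2 ⟨z, hz, Part.mem_bind_iff.2 ⟨u, hu, h⟩⟩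

/-! ### The forward direction: composition can only increase the domain code size -/

lemma forward {φ₁ φ₂ β α : Word k →. Word k} (h₁ : IsRIAut φ₁) (h₂ : IsRIAut φ₂)
    (hα : IsRIAut α) (heq : φ₂ = (β.comp φ₁).comp α) :
    (domC φ₁).ncard ≤ (domC φ₂).ncard := by
  classical
  obtain ⟨hC₁fin, hC₁pc, hC₁co, hC₁gen, hC₁sub⟩ := domC_spec h₁
  obtain ⟨hC₂fin, hC₂pc, hC₂co, hC₂gen, hC₂sub⟩ := domC_spec h₂
  set C₁ := domC φ₁ with hC₁def
  set C₂ := domC φ₂ with hC₂def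
  have hkey : ∀ x ∈ φ₂.Dom, x ∈ α.Dom ∧ pget α x ∈ φ₁.Dom := by
    intro x hx
    have hm : pget φ₂ x ∈ φ₂ x := pget_mem hx
    rw [heq] at hm
    obtain ⟨z, hz, u, hu, -⟩ := comp_mem_iff.1 hm
    have hzd : x ∈ α.Dom := mem_dom_of_mem hz
    have hze : z = pget α x := eq_pget_of_mem hz
    exact ⟨hzd, hze ▸ mem_dom_of_mem hu⟩
  have hdomsub : φ₂.Dom ⊆ α.Dom := fun x hx => (hkey x hx).1
  set A₂ : Set (Word k) := pget α '' C₂ with hA₂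
  have hA₂fin : A₂.Finite := hC₂fin.image _
  have hA₂card : A₂.ncard = C₂.ncard :=
    Set.ncard_image_of_injOn ((pget_injOn hα).mono (fun c hc => hdomsub (hC₂sub hc)))
  have hA₂co : Complete A₂ := by
    refine complete_pimage hα ?_ ?_
    · rw [← hC₂gen]; exact hdomsub
    · rw [← hC₂gen]; exact h₂.2.2.2.1
  have hA₂dom : ∀ q ∈ A₂, q ∈ φ₁.Dom := by
    rintro _ ⟨c, hc, rfl⟩
    exact (hkey c (hC₂sub hc)).2
  have huniq : ∀ q ∈ A₂, ∀ p ∈ C₁, (q <+: p ∨ p <+: q) → ∀ p' ∈ C₁,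
      (q <+: p' ∨ p' <+: q) → p = p' := by
    intro q hq p hp hcomp p' hp' hcomp'
    have hqd : q ∈ genIdeal C₁ := hC₁gen ▸ hA₂dom q hq
    obtain ⟨c', hc', hcq⟩ := hqd
    have key : ∀ r, r ∈ C₁ → (q <+: r ∨ r <+: q) → r = c' := by
      intro r hr hcr
      rcases hcr with h | h
      · exact (hC₁pc c' hc' r hr (hcq.trans h)).symm
      · exact pc_unique hC₁pc hr hc' h hcq
    rw [key p hp hcomp, key p' hp' hcomp']
  set F : Word k → Word k :=
    fun p => if h : ∃ q ∈ A₂, q <+: p ∨ p <+: q then h.choose else [] with hFdef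
  have hF : ∀ p, (h : ∃ q ∈ A₂, q <+: p ∨ p <+: q) → F p ∈ A₂ ∧ (F p <+: p ∨ p <+: F p) := by
    intro p h
    have : F p = h.choose := dif_pos h
    rw [this]
    exact h.choose_spec
  have hmapsto : ∀ p ∈ C₁, F p ∈ A₂ := fun p _ => (hF p (hA₂co p)).1
  have hinj : Set.InjOn F C₁ := by
    intro p₁ hp₁ p₂ hp₂ hFe
    obtain ⟨hq1, hc1⟩ := hF p₁ (hA₂co p₁)
    obtain ⟨hq2, hc2⟩ := hF p₂ (hA₂co p₂)
    rw [hFe] at hq1 hc1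
    exact huniq (F p₂) hq1 p₁ hp₁ hc1 p₂ hp₂ hc2
  calc C₁.ncard ≤ A₂.ncard := Set.ncard_le_ncard_of_injOn F hmapsto hinj hA₂fin
    _ = C₂.ncard := hA₂card


/-! ### The backward direction: the construction of `β` and `α` -/

lemma backward (hk : 2 ≤ k) {φ₁ φ₂ : Word k →. Word k} (h₁ : IsRIAut φ₁) (h₂ : IsRIAut φ₂)
    (hle : (domC φ₁).ncard ≤ (domC φ₂).ncard) :
    ∃ β α : Word k →. Word k, IsRIAut β ∧ IsRIAutDict α ∧
      ((∀ x₁ x₂ y₁ y₂, y₁ ∈ φ₁ x₁ → y₂ ∈ φ₁ x₂ → dictLe x₁ x₂ → dictLe y₁ y₂) →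
       (∀ x₁ x₂ y₁ y₂, y₁ ∈ φ₂ x₁ → y₂ ∈ φ₂ x₂ → dictLe x₁ x₂ → dictLe y₁ y₂) →
       IsRIAutDict β) ∧
      φ₂ = (β.comp φ₁).comp α := by
  classical
  obtain ⟨hC₁fin, hC₁pc, hC₁co, hC₁gen, hC₁sub⟩ := domC_spec h₁
  obtain ⟨hC₂fin, hC₂pc, hC₂co, hC₂gen, hC₂sub⟩ := domC_spec h₂
  set C₁ := domC φ₁ with hC₁def
  set C₂ := domC φ₂ with hC₂def
  -- sizes
  obtain ⟨j₁, hj₁⟩ := card_complete hk hC₁fin hC₁pc hC₁co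
  obtain ⟨j₂, hj₂⟩ := card_complete hk hC₂fin hC₂pc hC₂co
  have hd : 0 < k - 1 := by omega
  have hjle : j₁ ≤ j₂ := by
    have h' := hle
    rw [hj₁, hj₂] at h'
    exact Nat.le_of_mul_le_mul_right (Nat.le_of_add_le_add_left h') hd
  have hcard : C₂.ncard = C₁.ncard + (j₂ - j₁) * (k - 1) := by
    have e1 : j₂ * (k - 1) = j₁ * (k - 1) + (j₂ - j₁) * (k - 1) := by
      rw [← Nat.add_mul]
      congr 1
      omega
    rw [hj₁, hj₂, e1]
    ring
  -- the refinement P of C₁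
  obtain ⟨P, hPfin, hPpc, hPco, hPcard, hPsub⟩ :=
    refine_code hk hC₁fin hC₁pc hC₁co (j₂ - j₁)
  have hPC₂ : C₂.ncard = P.ncard := by rw [hPcard, hcard]
  -- the monotone bijection f : C₂ → P
  obtain ⟨f, hfinj, hfimg, hfmono⟩ := exists_mono_bij hC₂fin hPfin hPC₂
  have hfP : ∀ c ∈ C₂, f c ∈ P := fun c hc => hfimg ▸ Set.mem_image_of_mem f hc
  have hPdom : ∀ p ∈ P, p ∈ φ₁.Dom := by
    intro p hp
    have : p ∈ genIdeal C₁ := hPsub (subset_genIdeal hp)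
    rwa [← hC₁gen] at this
  have hPdom' : genIdeal P ⊆ φ₁.Dom := by
    intro x hx
    have : x ∈ genIdeal C₁ := hPsub hx
    rwa [← hC₁gen] at this
  -- α
  set α := extMap C₂ f with hαdef
  have hfPpc : PrefixCode (f '' C₂) := by rw [hfimg]; exact hPpc
  have hfPco : Complete (f '' C₂) := by rw [hfimg]; exact hPco
  have hαaut : IsRIAut α := extMap_riAut hC₂fin hC₂pc hC₂co hfPpc hfPco hfinj
  have hαdict : IsRIAutDict α := ⟨hαaut, extMap_dict hC₂pc hfPpc hfmono⟩
  -- Q₁ and Q₂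
  set Q₁ : Set (Word k) := pget φ₁ '' P with hQ₁def
  set Q₂ : Set (Word k) := pget φ₂ '' C₂ with hQ₂def
  have hQ₁fin : Q₁.Finite := hPfin.image _
  have hQ₁pc : PrefixCode Q₁ := prefixCode_pimage h₁ hPpc hPdom
  have hQ₁co : Complete Q₁ := complete_pimage h₁ hPdom' (complete_essential hPco)
  have hQ₂pc : PrefixCode Q₂ := prefixCode_pimage h₂ hC₂pc hC₂sub
  have hQ₂co : Complete Q₂ := by
    refine complete_pimage h₂ (by rw [← hC₂gen]) ?_
    rw [← hC₂gen]
    exact h₂.2.2.2.1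
  -- g
  set g : Word k → Word k :=
    fun y => pget φ₂ (Function.invFunOn f C₂ (Function.invFunOn (pget φ₁) P y)) with hgdef
  have hpginj : Set.InjOn (pget φ₁) P := (pget_injOn h₁).mono hPdom
  have hkey : ∀ c ∈ C₂, g (pget φ₁ (f c)) = pget φ₂ c := by
    intro c hc
    have e1 : Function.invFunOn (pget φ₁) P (pget φ₁ (f c)) = f c :=
      hpginj.leftInvOn_invFunOn (hfP c hc)
    have e2 : Function.invFunOn f C₂ (f c) = c := hfinj.leftInvOn_invFunOn hc
    rw [hgdef]
    simp only []
    rw [e1, e2]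
  have hQ₁eq : Q₁ = (fun c => pget φ₁ (f c)) '' C₂ := by
    rw [hQ₁def, ← hfimg, Set.image_image]
  have hgimg : g '' Q₁ = Q₂ := by
    rw [hQ₁eq, Set.image_image]
    exact Set.image_congr hkey
  have hpg2inj : Set.InjOn (pget φ₂) C₂ := (pget_injOn h₂).mono hC₂sub
  have hginj : Set.InjOn g Q₁ := by
    intro q hq q' hq' hgq
    rw [hQ₁eq] at hq hq'
    obtain ⟨c, hc, rfl⟩ := hq
    obtain ⟨c', hc', rfl⟩ := hq'
    rw [hkey c hc, hkey c' hc'] at hgq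
    rw [hpg2inj hc hc' hgq]
  have hgQpc : PrefixCode (g '' Q₁) := by rw [hgimg]; exact hQ₂pc
  have hgQco : Complete (g '' Q₁) := by rw [hgimg]; exact hQ₂co
  -- β
  set β := extMap Q₁ g with hβdef
  have hβaut : IsRIAut β := extMap_riAut hQ₁fin hQ₁pc hQ₁co hgQpc hgQco hginj
  -- dict property of β, given dict properties of φ₁ and φ₂
  have hβdict : (∀ x₁ x₂ y₁ y₂, y₁ ∈ φ₁ x₁ → y₂ ∈ φ₁ x₂ → dictLe x₁ x₂ → dictLe y₁ y₂) →
      (∀ x₁ x₂ y₁ y₂, y₁ ∈ φ₂ x₁ → y₂ ∈ φ₂ x₂ → dictLe x₁ x₂ → dictLe y₁ y₂) →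
      IsRIAutDict β := by
    intro hd₁ hd₂
    have hgmono : ∀ q ∈ Q₁, ∀ q' ∈ Q₁, dictLt q q' → dictLt (g q) (g q') := by
      intro q hq q' hq' hlt
      rw [hQ₁eq] at hq hq'
      obtain ⟨c, hc, rfl⟩ := hq
      obtain ⟨c', hc', rfl⟩ := hq'
      replace hlt : dictLt (pget φ₁ (f c)) (pget φ₁ (f c')) := hlt
      have hcc' : dictLt c c' := by
        rcases lt_trichotomy c c' with h | rfl | h
        · exact h
        · exact absurd (show pget φ₁ (f c) < pget φ₁ (f c) from hlt) (lt_irrefl _)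
        · exfalso
          have hfcc : dictLt (f c') (f c) := hfmono c' hc' c hc h
          have := hd₁ (f c') (f c) _ _ (pget_mem (hPdom _ (hfP c' hc')))
            (pget_mem (hPdom _ (hfP c hc))) (Or.inr hfcc)
          rcases this with heq | hlt'
          · rw [← heq] at hlt
            exact absurd (show pget φ₁ (f c') < pget φ₁ (f c') from hlt) (lt_irrefl _)
          · exact (lt_asymm (show pget φ₁ (f c) < pget φ₁ (f c') from hlt))
              (show pget φ₁ (f c') < pget φ₁ (f c) from hlt')
      have hres := hd₂ c c' _ _ (pget_mem (hC₂sub hc)) (pget_mem (hC₂sub hc')) (Or.inr hcc')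
      show dictLt (g (pget φ₁ (f c))) (g (pget φ₁ (f c')))
      rw [hkey c hc, hkey c' hc']
      rcases hres with heq | hlt'
      · exfalso
        have hcc : c = c' := hpg2inj hc hc' heq
        rw [hcc] at hlt
        exact absurd (show pget φ₁ (f c') < pget φ₁ (f c') from hlt) (lt_irrefl _)
      · exact hlt'
    exact ⟨hβaut, extMap_dict hQ₁pc hgQpc hgmono⟩
  -- the factorization
  refine ⟨β, α, hβaut, hαdict, hβdict, ?_⟩
  funext x
  apply Part.ext
  intro y
  rw [comp_mem_iff]
  constructor
  · intro hy
    have hx2 : x ∈ φ₂.Dom := mem_dom_of_mem hy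
    rw [hC₂gen] at hx2
    obtain ⟨c, hc, hw⟩ := hx2
    obtain ⟨w, rfl⟩ := hw
    have hfcd : f c ∈ φ₁.Dom := hPdom _ (hfP c hc)
    refine ⟨f c ++ w, (mem_extMap_iff hC₂pc).2 ⟨c, hc, w, rfl, rfl⟩,
      pget φ₁ (f c) ++ w, h₁.1 (f c) _ (pget_mem hfcd) w, ?_⟩
    refine (mem_extMap_iff hQ₁pc).2 ⟨pget φ₁ (f c), ⟨f c, hfP c hc, rfl⟩, w, rfl, ?_⟩
    rw [hkey c hc]
    exact Part.mem_unique hy (h₂.1 c _ (pget_mem (hC₂sub hc)) w)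
  · rintro ⟨z, hz, u, hu, hy⟩
    rw [mem_extMap_iff hC₂pc] at hz
    obtain ⟨c, hc, w, rfl, rfl⟩ := hz
    rw [mem_extMap_iff hQ₁pc] at hy
    obtain ⟨q, hq, v, huqv, rfl⟩ := hy
    have hfcd : f c ∈ φ₁.Dom := hPdom _ (hfP c hc)
    have hu' : pget φ₁ (f c) ++ w ∈ φ₁ (f c ++ w) := h₁.1 (f c) _ (pget_mem hfcd) w
    have hue : u = pget φ₁ (f c) ++ w := Part.mem_unique hu hu'
    have hq2 : pget φ₁ (f c) ∈ Q₁ := ⟨f c, hfP c hc, rfl⟩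
    have hqq : q = pget φ₁ (f c) :=
      pc_unique hQ₁pc hq hq2 (huqv ▸ List.prefix_append q v)
        (hue ▸ List.prefix_append (pget φ₁ (f c)) w)
    have hvw : v = w := by
      rw [hqq] at huqv
      rw [huqv] at hue
      exact List.append_cancel_left hue
    rw [hqq, hkey c hc, hvw]
    exact h₂.1 c _ (pget_mem (hC₂sub hc)) w

end S4

/-- The 𝒥-order of `riAut(k)` (and of `riAut_dict(k)`):
`φ₂ = β∘φ₁∘α` for some `β, α` iff `|domC(φ₂)| ≥ |domC(φ₁)|`. -/
theorem statement4 (k : ℕ) (hk : 2 ≤ k) :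
    (∀ φ₁ φ₂ : Word k →. Word k, IsRIAut φ₁ → IsRIAut φ₂ →
      ((∃ β α : Word k →. Word k, IsRIAut β ∧ IsRIAut α ∧
          φ₂ = (β.comp φ₁).comp α) ↔
        (domC φ₁).ncard ≤ (domC φ₂).ncard)) ∧
    (∀ φ₁ φ₂ : Word k →. Word k, IsRIAutDict φ₁ → IsRIAutDict φ₂ →
      ((∃ β α : Word k →. Word k, IsRIAutDict β ∧ IsRIAutDict α ∧
          φ₂ = (β.comp φ₁).comp α) ↔
        (domC φ₁).ncard ≤ (domC φ₂).ncard)) := by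
  constructor
  · intro φ₁ φ₂ h₁ h₂
    constructor
    · rintro ⟨β, α, hβ, hα, heq⟩
      exact S4.forward h₁ h₂ hα heq
    · intro hle
      obtain ⟨β, α, hβ, hα, -, heq⟩ := S4.backward hk h₁ h₂ hle
      exact ⟨β, α, hβ, hα.1, heq⟩
  · intro φ₁ φ₂ h₁ h₂
    constructor
    · rintro ⟨β, α, hβ, hα, heq⟩
      exact S4.forward h₁.1 h₂.1 hα.1 heq
    · intro hle
      obtain ⟨β, α, hβ, hα, hβd, heq⟩ := S4.backward hk h₁.1 h₂.1 hle
      exact ⟨β, α, hβd h₁.2 h₂.2, hα, heq⟩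
end

section
/- The monoid riAut(k) is finite-𝒥-above: for every φ ∈ riAut(k), the set {ψ ∈ riAut(k) : φ ≤_J ψ} is finite, where φ ≤_J ψ means φ = β∘ψ∘α for some β, α ∈ riAut(k). The same holds for riAut_dict(k). -/
namespace Statement5Aux

variable {k : ℕ}

lemma exists_minGen_prefix {R : Set (Word k)} {x : Word k} (hx : x ∈ R) :
    ∃ p ∈ minGen R, p <+: x := by
  classical
  have hex : ∃ n, x.take n ∈ R := ⟨x.length, by simpa using hx⟩
  refine ⟨x.take (Nat.find hex), ⟨Nat.find_spec hex, ?_⟩, List.take_prefix _ _⟩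
  intro y hy hyp
  have hyx : y <+: x := hyp.trans (List.take_prefix _ _)
  have h2 : ¬ y.length < Nat.find hex := fun hlt =>
    Nat.find_min hex hlt ((List.prefix_iff_eq_take.mp hyx) ▸ hy)
  have hle : y.length ≤ (x.take (Nat.find hex)).length := hyp.length_le
  have hnx : (x.take (Nat.find hex)).length ≤ Nat.find hex := by
    simp [List.length_take]
  exact hyp.eq_of_length (le_antisymm hle (hnx.trans (Nat.le_of_not_lt h2)))

lemma prefixCode_minGen (R : Set (Word k)) : PrefixCode (minGen R) :=
  fun u hu v hv huv => hv.2 u hu.1 huv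

lemma minGen_subset {C : Set (Word k)} : minGen (genIdeal C) ⊆ C := by
  intro x hx
  obtain ⟨c, hc, hcx⟩ := hx.1
  have hcg : c ∈ genIdeal C := ⟨c, hc, List.prefix_refl c⟩
  rw [← hx.2 c hcg hcx]; exact hc

lemma minGen_finite {R : Set (Word k)} (h : FinGenIdeal R) : (minGen R).Finite := by
  obtain ⟨C, hC, rfl⟩ := h; exact hC.subset minGen_subset

/-- every word is prefix-comparable to some element of `P`. -/
def Full (P : Set (Word k)) : Prop := ∀ u : Word k, ∃ p ∈ P, p <+: u ∨ u <+: p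

lemma genIdeal_rightIdeal (C : Set (Word k)) : RightIdeal (genIdeal C) := by
  rintro x ⟨c, hc, hcx⟩ w
  exact ⟨c, hc, hcx.trans (List.prefix_append x w)⟩

lemma full_minGen {R : Set (Word k)} (hE : EssentialIdeal R) : Full (minGen R) := by
  intro u
  obtain ⟨x, hxR, hxu⟩ := hE (genIdeal {u}) (genIdeal_rightIdeal _)
    ⟨u, u, rfl, List.prefix_refl u⟩
  obtain ⟨v, hv, hvx⟩ := hxu
  obtain ⟨p, hp, hpx⟩ := exists_minGen_prefix hxR
  exact ⟨p, hp, List.prefix_or_prefix_of_prefix hpx (hv ▸ hvx)⟩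

lemma length_lt_ncard_of_full (hk : 2 ≤ k) {P : Set (Word k)} (hP : PrefixCode P)
    (hfin : P.Finite) (hfull : Full P) {q : Word k} (hq : q ∈ P) :
    q.length < P.ncard := by
  classical
  have hb0 : (0 : ℕ) < k := by omega
  have hb1 : (1 : ℕ) < k := by omega
  set a : Fin q.length → Fin k := fun i =>
    if q.get i = ⟨0, hb0⟩ then ⟨1, hb1⟩ else ⟨0, hb0⟩ with ha_def
  have ha : ∀ i, a i ≠ q.get i := by
    intro i
    by_cases h : q.get i = ⟨0, hb0⟩
    · rw [ha_def]; simp only [h, if_pos]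
      intro hcon
      exact absurd (congrArg Fin.val hcon) (by simp)
    · rw [ha_def]; simp only [h, if_neg, if_false]
      exact fun hcon => h hcon.symm
  have htl : ∀ i : Fin q.length, (q.take i).length = i := by
    intro i; simp [List.length_take, Nat.min_eq_left i.isLt.le]
  have hul : ∀ i : Fin q.length, (q.take i ++ [a i]).length = (i : ℕ) + 1 := by
    intro i; simp [htl i]
  have hp : ∀ i : Fin q.length, ∃ p ∈ P, (q.take i ++ [a i]) <+: p := by
    intro i
    obtain ⟨p, hpP, hcomp⟩ := hfull (q.take i ++ [a i])
    rcases hcomp with h | h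
    · by_cases hpl : p.length ≤ (i : ℕ)
      · exfalso
        have h1 : p <+: q.take i :=
          List.prefix_of_prefix_length_le h (List.prefix_append _ _)
            (by rw [htl i]; exact hpl)
        have hpq : p = q := hP p hpP q hq (h1.trans (List.take_prefix _ _))
        have := i.isLt
        rw [hpq] at hpl
        omega
      · refine ⟨p, hpP, List.prefix_of_prefix_length_le (List.prefix_refl _) h ?_⟩
        rw [hul i]; omega
    · exact ⟨p, hpP, h⟩
  choose f hfP hf using hp
  have htake : ∀ i : Fin q.length, (q.take ((i : ℕ) + 1)).length = (i : ℕ) + 1 := by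
    intro i; simp [List.length_take, Nat.min_eq_left i.isLt]
  have hne : ∀ i : Fin q.length, (q.take i ++ [a i]) ≠ q.take ((i : ℕ) + 1) := by
    intro i hcon
    rw [← List.take_concat_get' q i i.isLt] at hcon
    have h2 : [a i] = [q[(i : ℕ)]] := List.append_inj_right hcon rfl
    have h3 : a i = q.get i := by
      simpa [List.get_eq_getElem] using List.head_eq_of_cons_eq h2
    exact ha i h3
  -- `f i` determines `i`
  have hkey : ∀ i j : Fin q.length, (i : ℕ) < (j : ℕ) → f i ≠ f j := by
    intro i j hij hcon
    have hIJ : (q.take i ++ [a i]) <+: (q.take j ++ [a j]) :=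
      List.prefix_of_prefix_length_le (hf i) (hcon ▸ hf j)
        (by rw [hul i, hul j]; omega)
    have hIJ2 : q.take ((i : ℕ) + 1) <+: (q.take j ++ [a j]) :=
      (List.take_prefix_take_left (l := q) (i := (i : ℕ) + 1) (j := j) (by omega)).trans (List.prefix_append _ _)
    have : (q.take i ++ [a i]) = q.take ((i : ℕ) + 1) :=
      (List.prefix_of_prefix_length_le hIJ hIJ2
        (by rw [hul i, htake i])).eq_of_length (by rw [hul i, htake i])
    exact hne i this
  have hinj : Function.Injective f := by
    intro i j hij
    by_contra hne'
    have hne'' : (i : ℕ) ≠ (j : ℕ) := fun h => hne' (Fin.ext h)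
    rcases hne''.lt_or_gt with h | h
    · exact hkey i j h hij
    · exact hkey j i h hij.symm
  have hfq : ∀ i, f i ≠ q := by
    intro i hcon
    have h1 : (q.take i ++ [a i]) <+: q := by have h0 := hf i; rw [hcon] at h0; exact h0
    have h2 : (q.take i ++ [a i]) <+: q.take ((i : ℕ) + 1) :=
      List.prefix_of_prefix_length_le h1 (List.take_prefix _ _)
        (by rw [hul i, htake i])
    exact hne i (h2.eq_of_length (by rw [hul i, htake i]))
  -- counting
  have hmap : ∀ i : Fin q.length, f i ∈ P \ {q} := fun i => ⟨hfP i, hfq i⟩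
  have hcard : q.length ≤ (P \ {q}).ncard := by
    have h1 : (Set.univ : Set (Fin q.length)).ncard ≤ (P \ {q}).ncard :=
      Set.ncard_le_ncard_of_injOn f (fun i _ => hmap i) (hinj.injOn) hfin.diff
    simpa [Set.ncard_univ] using h1
  exact lt_of_le_of_lt hcard (Set.ncard_diff_singleton_lt_of_mem hq hfin)

lemma finite_bounded (k N : ℕ) :
    {ψ : Word k →. Word k | IsRIH ψ ∧
      ∀ p ∈ minGen ψ.Dom, p.length ≤ N ∧ ∀ y ∈ ψ p, y.length ≤ N}.Finite := by
  classical
  set S : Set (Word k) := {l | l.length ≤ N} with hS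
  have hSfin : S.Finite := List.finite_length_le (Fin k) N
  set G : (Word k →. Word k) → Set (Word k × Word k) :=
    fun ψ => {xy | xy.2 ∈ ψ xy.1 ∧ xy.1.length ≤ N ∧ xy.2.length ≤ N} with hG
  have key : ∀ (ψ₁ ψ₂ : Word k →. Word k), IsRIH ψ₁ →
      (∀ p ∈ minGen ψ₁.Dom, p.length ≤ N ∧ ∀ y ∈ ψ₁ p, y.length ≤ N) →
      IsRIH ψ₂ → G ψ₁ = G ψ₂ → ∀ x y, y ∈ ψ₁ x → y ∈ ψ₂ x := by
    intro ψ₁ ψ₂ hR₁ hB₁ hR₂ hEq x y hy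
    have hxdom : x ∈ ψ₁.Dom := (PFun.mem_dom ψ₁ x).mpr ⟨y, hy⟩
    obtain ⟨p, hp, hpx⟩ := exists_minGen_prefix hxdom
    obtain ⟨w, rfl⟩ := hpx
    obtain ⟨z, hz⟩ := (PFun.mem_dom ψ₁ p).mp hp.1
    have hzw : z ++ w ∈ ψ₁ (p ++ w) := hR₁ p z hz w
    have hyz : y = z ++ w := Part.mem_unique hy hzw
    obtain ⟨hpl, hvl⟩ := hB₁ p hp
    have hmem : (p, z) ∈ G ψ₁ := ⟨hz, hpl, hvl z hz⟩
    rw [hEq] at hmem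
    rw [hyz]
    exact hR₂ p z hmem.1 w
  apply Set.Finite.of_finite_image (f := G)
  · apply ((hSfin.prod hSfin).finite_subsets).subset
    rintro _ ⟨ψ, _, rfl⟩
    rintro ⟨x, y⟩ ⟨_, h1, h2⟩
    exact ⟨h1, h2⟩
  · rintro ψ₁ ⟨hR₁, hB₁⟩ ψ₂ ⟨hR₂, hB₂⟩ hG12
    exact PFun.ext fun x y =>
      ⟨key ψ₁ ψ₂ hR₁ hB₁ hR₂ hG12 x y, key ψ₂ ψ₁ hR₂ hB₂ hR₁ hG12.symm x y⟩

end Statement5Aux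

/-- `riAut(k)` and `riAut_dict(k)` are finite-𝒥-above: for each
`φ`, the set of `ψ` with `φ ≤_J ψ` (i.e. `φ = β∘ψ∘α` for some `β, α`) is finite. -/
theorem statement5 (k : ℕ) (hk : 2 ≤ k) :
    (∀ φ : Word k →. Word k, IsRIAut φ →
      {ψ : Word k →. Word k | IsRIAut ψ ∧
        ∃ β α : Word k →. Word k, IsRIAut β ∧ IsRIAut α ∧
          φ = (β.comp ψ).comp α}.Finite) ∧
    (∀ φ : Word k →. Word k, IsRIAutDict φ →
      {ψ : Word k →. Word k | IsRIAutDict ψ ∧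
        ∃ β α : Word k →. Word k, IsRIAutDict β ∧ IsRIAutDict α ∧
          φ = (β.comp ψ).comp α}.Finite) := by
  have main : ∀ φ : Word k →. Word k, IsRIAut φ →
      {ψ : Word k →. Word k | IsRIAut ψ ∧
        ∃ β α : Word k →. Word k, IsRIAut β ∧ IsRIAut α ∧
          φ = (β.comp ψ).comp α}.Finite := by
    intro φ hφ
    classical
    set N := (minGen φ.Dom).ncard with hNdef
    apply (Statement5Aux.finite_bounded k N).subset
    rintro ψ ⟨hψ, β, α, hβ, hα, heq⟩
    obtain ⟨hψR, hψinj, hψdf, hψde, hψrf, hψre⟩ := hψ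
    refine ⟨hψR, ?_⟩
    have hmem : ∀ x y, y ∈ φ x → ∃ z z', z ∈ α x ∧ z' ∈ ψ z ∧ y ∈ β z' := by
      intro x y hy
      rw [heq, PFun.comp_apply] at hy
      obtain ⟨z, hz, hy⟩ := Part.mem_bind_iff.mp hy
      rw [PFun.comp_apply] at hy
      obtain ⟨z', hz', hy⟩ := Part.mem_bind_iff.mp hy
      exact ⟨z, z', hz, hz', hy⟩
    have hψfin : (minGen ψ.Dom).Finite := Statement5Aux.minGen_finite hψdf
    have hφfin : (minGen φ.Dom).Finite := Statement5Aux.minGen_finite hφ.2.2.1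
    have hψfull : Statement5Aux.Full (minGen ψ.Dom) := Statement5Aux.full_minGen hψde
    have hψcode : PrefixCode (minGen ψ.Dom) := Statement5Aux.prefixCode_minGen _
    have hsur : ∀ q ∈ minGen ψ.Dom, ∃ p ∈ minGen φ.Dom, ∃ r, r ∈ α p ∧ q <+: r := by
      intro q hq
      obtain ⟨y, hyran, hyI⟩ := hα.2.2.2.2.2 (genIdeal {q})
        (Statement5Aux.genIdeal_rightIdeal _) ⟨q, q, rfl, List.prefix_refl q⟩
      obtain ⟨c, hc, hcy⟩ := hyI
      have hqy : q <+: y := hc ▸ hcy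
      obtain ⟨x, hx⟩ : ∃ x, y ∈ α x := hyran
      obtain ⟨x', hx'φ, hx'I⟩ := hφ.2.2.2.1 (genIdeal {x})
        (Statement5Aux.genIdeal_rightIdeal _) ⟨x, x, rfl, List.prefix_refl x⟩
      obtain ⟨c', hc', hcx'⟩ := hx'I
      have hxx' : x <+: x' := hc' ▸ hcx'
      obtain ⟨p, hp, hpx'⟩ := Statement5Aux.exists_minGen_prefix hx'φ
      obtain ⟨w', rfl⟩ := hpx'
      obtain ⟨w, hw⟩ := hxx'
      obtain ⟨y', hy'⟩ := (PFun.mem_dom φ p).mp hp.1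
      obtain ⟨r, z', hr, hz', -⟩ := hmem p y' hy'
      have hrdom : r ∈ ψ.Dom := (PFun.mem_dom ψ r).mpr ⟨z', hz'⟩
      have hval1 : r ++ w' ∈ α (p ++ w') := hα.1 p r hr w'
      have hval2 : y ++ w ∈ α (p ++ w') := by rw [← hw]; exact hα.1 x y hx w
      have hz : r ++ w' = y ++ w := Part.mem_unique hval1 hval2
      have hqz : q <+: r ++ w' := by rw [hz]; exact hqy.trans (List.prefix_append y w)
      rcases List.prefix_or_prefix_of_prefix hqz (List.prefix_append r w') with hcomp | hcomp
      · exact ⟨p, hp, r, hr, hcomp⟩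
      · obtain ⟨q', hq', hq'r⟩ := Statement5Aux.exists_minGen_prefix hrdom
        have hq'q : q' = q := hψcode q' hq' q hq (hq'r.trans hcomp)
        exact ⟨p, hp, r, hr, hq'q ▸ hq'r⟩
    have hcard : (minGen ψ.Dom).ncard ≤ N := by
      have hchoice : ∀ q : Word k, ∃ p : Word k,
          q ∈ minGen ψ.Dom → p ∈ minGen φ.Dom ∧ ∃ r, r ∈ α p ∧ q <+: r := by
        intro q
        by_cases h : q ∈ minGen ψ.Dom
        · obtain ⟨p, hp, hr⟩ := hsur q h; exact ⟨p, fun _ => ⟨hp, hr⟩⟩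
        · exact ⟨[], fun h' => absurd h' h⟩
      choose g hg using hchoice
      refine Set.ncard_le_ncard_of_injOn g (fun q hq => (hg q hq).1) ?_ hφfin
      intro q₁ h₁ q₂ h₂ hgq
      obtain ⟨-, r₁, hr₁, hq₁⟩ := hg q₁ h₁
      obtain ⟨-, r₂, hr₂, hq₂⟩ := hg q₂ h₂
      rw [hgq] at hr₁
      have hrr : r₁ = r₂ := Part.mem_unique hr₁ hr₂
      rw [hrr] at hq₁
      rcases List.prefix_or_prefix_of_prefix hq₁ hq₂ with h | h
      · exact hψcode q₁ h₁ q₂ h₂ h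
      · exact (hψcode q₂ h₂ q₁ h₁ h).symm
    set Q : Set (Word k) := {y | ∃ p ∈ minGen ψ.Dom, y ∈ ψ p} with hQdef
    have hQcode : PrefixCode Q := by
      rintro z₁ ⟨p₁, hp₁, hz₁⟩ z₂ ⟨p₂, hp₂, hz₂⟩ h
      obtain ⟨w, rfl⟩ := h
      have h1 : z₁ ++ w ∈ ψ (p₁ ++ w) := hψR p₁ z₁ hz₁ w
      have h2 : p₂ = p₁ ++ w := hψinj p₂ (p₁ ++ w) (z₁ ++ w) hz₂ h1
      have h3 : p₁ = p₂ := hψcode p₁ hp₁ p₂ hp₂ ⟨w, h2.symm⟩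
      have hlen := congrArg List.length (h3.trans h2)
      rw [List.length_append] at hlen
      have hw : w = [] := List.length_eq_zero_iff.mp (by omega)
      simp [hw]
    have hQfull : Statement5Aux.Full Q := by
      intro u
      obtain ⟨v, hvran, hvI⟩ := hψre (genIdeal {u})
        (Statement5Aux.genIdeal_rightIdeal _) ⟨u, u, rfl, List.prefix_refl u⟩
      obtain ⟨c, hc, hcv⟩ := hvI
      have huv : u <+: v := hc ▸ hcv
      obtain ⟨x, hx⟩ : ∃ x, v ∈ ψ x := hvran
      have hxdom : x ∈ ψ.Dom := (PFun.mem_dom ψ x).mpr ⟨v, hx⟩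
      obtain ⟨p, hp, hpx⟩ := Statement5Aux.exists_minGen_prefix hxdom
      obtain ⟨w, rfl⟩ := hpx
      obtain ⟨z, hz⟩ := (PFun.mem_dom ψ p).mp hp.1
      have h1 : z ++ w ∈ ψ (p ++ w) := hψR p z hz w
      have h2 : v = z ++ w := Part.mem_unique hx h1
      have hzv : z <+: v := by rw [h2]; exact List.prefix_append z w
      exact ⟨z, ⟨p, hp, hz⟩, List.prefix_or_prefix_of_prefix hzv huv⟩
    set gg : Word k → Word k := fun p => if h : (ψ p).Dom then (ψ p).get h else [] with hgg
    have hQsub : Q ⊆ gg '' (minGen ψ.Dom) := by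
      rintro y ⟨p, hp, hy⟩
      refine ⟨p, hp, ?_⟩
      have hd : (ψ p).Dom := Part.dom_iff_mem.mpr ⟨y, hy⟩
      simp only [hgg, dif_pos hd]
      exact Part.get_eq_of_mem hy hd
    have hQfin : Q.Finite := (hψfin.image gg).subset hQsub
    have hQcard : Q.ncard ≤ N :=
      le_trans (le_trans (Set.ncard_le_ncard hQsub (hψfin.image gg))
        (Set.ncard_image_le hψfin)) hcard
    intro p hp
    constructor
    · exact le_of_lt (lt_of_lt_of_le
        (Statement5Aux.length_lt_ncard_of_full hk hψcode hψfin hψfull hp) hcard)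
    · intro y hy
      have hyQ : y ∈ Q := ⟨p, hp, hy⟩
      exact le_of_lt (lt_of_lt_of_le
        (Statement5Aux.length_lt_ncard_of_full hk hQcode hQfin hQfull hyQ) hQcard)
  constructor
  · exact main
  · intro φ hφ
    apply (main φ hφ.1).subset
    rintro ψ ⟨hψ, β, α, hβ, hα, heq⟩
    exact ⟨hψ.1, β, α, hβ.1, hα.1, heq⟩
end

section
/- If φ ∈ riAut_dict(k) satisfies Dom(φ) = Im(φ), then φ(x) = x for every x ∈ Dom(φ). Consequently, every subsemigroup of riAut_dict(k) that is a group (with some idempotent of riAut_dict(k) as its identity) has exactly one element; i.e., all subgroups of riAut_dict(k) are trivial. -/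
/- ### Auxiliary lemmas -/

/-- `dictLt` agrees with the Mathlib order on `List (Fin k)`. -/
lemma dictLt_iff_lt {k : ℕ} {u v : Word k} : dictLt u v ↔ u < v := Iff.rfl

/-- A strictly monotone map of a finite subset of a linear order into itself
fixes every element. -/
lemma fix_of_strictMonoOn {α : Type*} [LinearOrder α] {S : Set α} (hS : S.Finite)
    {f : α → α} (hmap : Set.MapsTo f S S) (hinj : Set.InjOn f S)
    (hmono : ∀ a ∈ S, ∀ b ∈ S, a < b → f a < f b) : ∀ a ∈ S, f a = a := by
  -- f '' S = S
  have himg : f '' S = S :=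
    Set.eq_of_subset_of_ncard_le (Set.image_subset_iff.mpr hmap)
      (Set.ncard_image_of_injOn hinj).ge hS
  by_contra h
  push_neg at h
  obtain ⟨a, haS, hne⟩ := h
  set T : Set α := {a ∈ S | f a ≠ a} with hT
  have hTfin : T.Finite := hS.subset (Set.sep_subset _ _)
  have hTne : T.Nonempty := ⟨a, haS, hne⟩
  obtain ⟨x₀, hx₀T, hx₀min⟩ := Set.exists_min_image T id hTfin hTne
  obtain ⟨hx₀S, hx₀ne⟩ := hx₀T
  rcases lt_trichotomy (f x₀) x₀ with hlt | heq | hgt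
  · -- f x₀ < x₀ : then f x₀ is fixed, contradicting injectivity
    have hfS : f x₀ ∈ S := hmap hx₀S
    have hfix : f (f x₀) = f x₀ := by
      by_contra hne'
      exact absurd (hx₀min (f x₀) ⟨hfS, hne'⟩) (not_le_of_gt hlt)
    exact hx₀ne (hinj hfS hx₀S hfix)
  · exact hx₀ne heq
  · -- x₀ < f x₀ : take a preimage of x₀
    have hmem : x₀ ∈ f '' S := by rw [himg]; exact hx₀S
    obtain ⟨y, hyS, hyx⟩ := hmem
    rcases lt_trichotomy y x₀ with h1 | h2 | h3
    · have hfy : f y = y := by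
        by_contra hne'
        exact absurd (hx₀min y ⟨hyS, hne'⟩) (not_le_of_gt h1)
      rw [hyx] at hfy
      exact (ne_of_lt h1) hfy.symm
    · rw [h2] at hyx
      exact hx₀ne hyx
    · have hcon := hmono x₀ hx₀S y hyS h3
      rw [hyx] at hcon
      exact absurd hcon (not_lt_of_gt hgt)

/-- Every element of a finitely generated right ideal has a prefix in `minGen R`. -/
lemma exists_minGen_prefix_aux {k : ℕ} {R : Set (Word k)} :
    ∀ (n : ℕ) (x : Word k), x.length = n → x ∈ R → ∃ p ∈ minGen R, p <+: x := by
  intro n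
  induction n using Nat.strong_induction_on with
  | _ n ih =>
    intro x hn hx
    by_cases hmin : ∀ y ∈ R, y <+: x → y = x
    · exact ⟨x, ⟨hx, hmin⟩, List.prefix_refl x⟩
    · push_neg at hmin
      obtain ⟨y, hyR, hpre, hne⟩ := hmin
      have hlen : y.length < x.length :=
        lt_of_le_of_ne hpre.length_le (fun h => hne (hpre.eq_of_length h))
      obtain ⟨p, hp, hppre⟩ := ih y.length (hn ▸ hlen) y rfl hyR
      exact ⟨p, hp, hppre.trans hpre⟩

lemma exists_minGen_prefix {k : ℕ} {R : Set (Word k)} (x : Word k) (hx : x ∈ R) :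
    ∃ p ∈ minGen R, p <+: x :=
  exists_minGen_prefix_aux x.length x rfl hx

/-- The key lemma: part one of the statement. -/
lemma part_one {k : ℕ} (φ : Word k →. Word k) (hφ : IsRIAutDict φ)
    (hdr : φ.Dom = φ.ran) : ∀ x y, y ∈ φ x → y = x := by
  obtain ⟨⟨hRIH, hinj, ⟨C, hCfin, hCgen⟩, _, _, _⟩, hdict⟩ := hφ
  -- the domain code
  set P : Set (Word k) := minGen φ.Dom with hP
  -- P is finite (it is contained in C)
  have hPsubC : P ⊆ C := by
    rintro p ⟨hpR, hpmin⟩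
    have : p ∈ genIdeal C := hCgen ▸ hpR
    obtain ⟨c, hcC, hcp⟩ := this
    have hcR : c ∈ φ.Dom := hCgen ▸ ⟨c, hcC, List.prefix_refl c⟩
    exact (hpmin c hcR hcp) ▸ hcC
  have hPfin : P.Finite := hCfin.subset hPsubC
  -- the function induced by φ
  classical
  set f : Word k → Word k := fun p => if h : (φ p).Dom then (φ p).get h else [] with hf
  have hfmem : ∀ p ∈ φ.Dom, f p ∈ φ p := by
    intro p hp
    show (if h : (φ p).Dom then (φ p).get h else []) ∈ φ p
    have hp' : (φ p).Dom := hp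
    rw [dif_pos hp']
    exact Part.get_mem hp'
  -- φ maps P into P
  have hmap : Set.MapsTo f P P := by
    rintro p ⟨hpR, hpmin⟩
    have hfp : f p ∈ φ p := hfmem p hpR
    have hfpran : f p ∈ φ.ran := ⟨p, hfp⟩
    constructor
    · exact hdr ▸ hfpran
    · -- f p is prefix-minimal in φ.Dom = φ.ran
      intro z hzR hzpre
      have hzran : z ∈ φ.ran := hdr ▸ hzR
      obtain ⟨x, hzx⟩ := hzran
      obtain ⟨s, hs⟩ := hzpre
      have h1 : z ++ s ∈ φ (x ++ s) := hRIH x z hzx s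
      rw [hs] at h1
      have hxs : x ++ s = p := hinj (x ++ s) p (f p) h1 hfp
      have hxR : x ∈ φ.Dom := Part.dom_iff_mem.mpr ⟨z, hzx⟩
      have hxp : x = p := hpmin x hxR (hxs ▸ ⟨s, rfl⟩)
      have hsnil : s = [] := by
        have : x ++ s = x ++ [] := by rw [List.append_nil]; rw [hxs, ← hxp]
        exact List.append_cancel_left this
      rw [← hs, hsnil, List.append_nil]
  -- injectivity on P
  have hinjP : Set.InjOn f P := by
    intro u hu v hv huv
    exact hinj u v (f u) (hfmem u hu.1) (huv ▸ hfmem v hv.1)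
  -- strict monotonicity on P
  have hmono : ∀ u ∈ P, ∀ v ∈ P, u < v → f u < f v := by
    intro u hu v hv hlt
    have h1 : dictLe (f u) (f v) :=
      hdict u v (f u) (f v) (hfmem u hu.1) (hfmem v hv.1) (Or.inr hlt)
    rcases h1 with heq | hlt'
    · exact absurd (hinjP hu hv heq) (ne_of_lt hlt)
    · exact hlt'
  -- f fixes P
  have hfix : ∀ p ∈ P, f p = p := fix_of_strictMonoOn hPfin hmap hinjP hmono
  -- conclude
  intro x y hxy
  have hxR : x ∈ φ.Dom := Part.dom_iff_mem.mpr ⟨y, hxy⟩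
  obtain ⟨p, hpP, hppre⟩ := exists_minGen_prefix x hxR
  obtain ⟨w, hw⟩ := hppre
  have h1 : p ++ w ∈ φ (p ++ w) := by
    have := hRIH p (f p) (hfmem p hpP.1) w
    rwa [hfix p hpP] at this
  rw [hw] at h1
  exact Part.mem_unique hxy h1

/-- If `φ ∈ riAut_dict(k)` has `Dom(φ) = Im(φ)` then `φ` is the
identity on its domain; consequently every subsemigroup of `riAut_dict(k)` that
is a group (with some idempotent as identity) has exactly one element. -/
theorem statement8 (k : ℕ) (hk : 2 ≤ k) :
    (∀ φ : Word k →. Word k, IsRIAutDict φ → φ.Dom = φ.ran →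
      ∀ x y, y ∈ φ x → y = x) ∧
    (∀ S : Set (Word k →. Word k),
      (∀ φ ∈ S, IsRIAutDict φ) →
      (∀ φ ∈ S, ∀ ψ ∈ S, φ.comp ψ ∈ S) →
      (∃ e ∈ S, e.comp e = e ∧ (∀ φ ∈ S, φ.comp e = φ ∧ e.comp φ = φ) ∧
        ∀ φ ∈ S, ∃ ψ ∈ S, φ.comp ψ = e ∧ ψ.comp φ = e) →
      ∃ e, S = {e}) := by
  constructor
  · exact fun φ hφ hdr => part_one φ hφ hdr
  · rintro S hS hmul ⟨e, heS, hee, hid, hinv⟩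
    -- e is the identity on its domain
    have heinj := (hS e heS).1.2.1
    have hefix : ∀ x y, y ∈ e x → y = x := by
      intro x y hxy
      have hxy' : y ∈ (e.comp e) x := by rw [hee]; exact hxy
      rw [PFun.comp_apply] at hxy'
      replace hxy' := Part.mem_bind_iff.mp hxy'
      obtain ⟨z, hz, hyz⟩ := hxy'
      have hzy : z = y := Part.mem_unique hz hxy
      rw [hzy] at hz hyz
      exact heinj y x y hyz hz
    -- show every φ ∈ S equals e
    refine ⟨e, Set.eq_singleton_iff_unique_mem.mpr ⟨heS, fun φ hφS => ?_⟩⟩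
    obtain ⟨ψ, hψS, hφψ, hψφ⟩ := hinv φ hφS
    have hφinj := (hS φ hφS).1.2.1
    -- Dom φ = Dom e
    have hDφe : φ.Dom = e.Dom := by
      apply Set.Subset.antisymm
      · -- Dom φ ⊆ Dom e via φ.comp e = φ
        intro x hx
        have h1 : x ∈ (φ.comp e).Dom := by rw [(hid φ hφS).1]; exact hx
        rw [PFun.mem_dom] at h1
        obtain ⟨y, hy⟩ := h1
        rw [PFun.comp_apply] at hy
        replace hy := Part.mem_bind_iff.mp hy
        obtain ⟨z, hz, _⟩ := hy
        exact Part.dom_iff_mem.mpr ⟨z, hz⟩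
      · -- Dom e ⊆ Dom φ via ψ.comp φ = e
        intro x hx
        have h1 : x ∈ (ψ.comp φ).Dom := by rw [hψφ]; exact hx
        rw [PFun.mem_dom] at h1
        obtain ⟨y, hy⟩ := h1
        rw [PFun.comp_apply] at hy
        replace hy := Part.mem_bind_iff.mp hy
        obtain ⟨z, hz, _⟩ := hy
        exact Part.dom_iff_mem.mpr ⟨z, hz⟩
    -- ran φ = Dom φ
    have hrφ : φ.Dom = φ.ran := by
      apply Set.Subset.antisymm
      · -- Dom φ ⊆ ran φ via φ.comp ψ = e
        intro x hx
        have hxe : x ∈ e.Dom := hDφe ▸ hx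
        have hxx : x ∈ e x := by
          rw [PFun.mem_dom] at hxe
          obtain ⟨y, hy⟩ := hxe
          have hyx := hefix x y hy
          rw [hyx] at hy
          exact hy
        have hmem : x ∈ (φ.comp ψ) x := by rw [hφψ]; exact hxx
        rw [PFun.comp_apply] at hmem
        replace hmem := Part.mem_bind_iff.mp hmem
        obtain ⟨z, _, hxz⟩ := hmem
        exact ⟨z, hxz⟩
      · -- ran φ ⊆ Dom φ via e.comp φ = φ (gives ran φ ⊆ Dom e)
        rintro y ⟨x, hxy⟩
        have hx : x ∈ φ.Dom := Part.dom_iff_mem.mpr ⟨y, hxy⟩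
        have h1 : x ∈ (e.comp φ).Dom := by rw [(hid φ hφS).2]; exact hx
        rw [PFun.mem_dom] at h1
        obtain ⟨v, hv⟩ := h1
        rw [PFun.comp_apply] at hv
        replace hv := Part.mem_bind_iff.mp hv
        obtain ⟨z, hz, hvz⟩ := hv
        have hzy : z = y := Part.mem_unique hz hxy
        rw [hzy] at hvz
        have hye : y ∈ e.Dom := Part.dom_iff_mem.mpr ⟨v, hvz⟩
        exact hDφe ▸ hye
    -- φ is the identity on its domain
    have hφfix : ∀ x y, y ∈ φ x → y = x := part_one φ (hS φ hφS) hrφ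
    -- conclude φ = e
    apply PFun.ext
    intro x y
    constructor
    · intro hxy
      have hyx := hφfix x y hxy
      have hx : x ∈ e.Dom := hDφe ▸ (Part.dom_iff_mem.mpr ⟨y, hxy⟩ : x ∈ φ.Dom)
      rw [PFun.mem_dom] at hx
      obtain ⟨z, hz⟩ := hx
      have hzx := hefix x z hz
      rw [hzx] at hz
      rw [hyx]
      exact hz
    · intro hxy
      have hyx := hefix x y hxy
      have hx : x ∈ φ.Dom := hDφe.symm ▸ (Part.dom_iff_mem.mpr ⟨y, hxy⟩ : x ∈ e.Dom)
      rw [PFun.mem_dom] at hx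
      obtain ⟨z, hz⟩ := hx
      have hzx := hφfix x z hz
      rw [hzx] at hz
      rw [hyx]
      exact hz
end

section
/- For all φ₁, φ₂ ∈ riAut(k): (i) there exists α ∈ riAut(k) with φ₂ = φ₁∘α if and only if Im(φ₂) ⊆ Im(φ₁); (ii) there exists β ∈ riAut(k) with φ₂ = β∘φ₁ if and only if Dom(φ₂) ⊆ Dom(φ₁). -/
section Aux9

variable {k : ℕ}

lemma genIdeal_rightIdeal (C : Set (Word k)) : RightIdeal (genIdeal C) := by
  rintro x ⟨c, hc, w', hw⟩ w
  exact ⟨c, hc, w' ++ w, by rw [← hw, List.append_assoc]⟩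

lemma subset_genIdeal (C : Set (Word k)) : C ⊆ genIdeal C :=
  fun c hc => ⟨c, hc, [], by simp⟩

lemma finGen_rightIdeal {R : Set (Word k)} (h : FinGenIdeal R) : RightIdeal R := by
  obtain ⟨C, -, rfl⟩ := h; exact genIdeal_rightIdeal C

/-- The inverse of a partial function, via choice. -/
noncomputable def pinv9 (φ : Word k →. Word k) : Word k →. Word k :=
  fun y => ⟨∃ x, y ∈ φ x, fun h => h.choose⟩

lemma mem_pinv9_of {φ : Word k →. Word k}
    (hinj : ∀ x₁ x₂ y, y ∈ φ x₁ → y ∈ φ x₂ → x₁ = x₂) {x y : Word k} (h : y ∈ φ x) :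
    x ∈ pinv9 φ y :=
  ⟨⟨x, h⟩, hinj _ _ _ (Exists.choose_spec (⟨x, h⟩ : ∃ x, y ∈ φ x)) h⟩

lemma of_mem_pinv9 {φ : Word k →. Word k} {x y : Word k} (h : x ∈ pinv9 φ y) : y ∈ φ x := by
  obtain ⟨he, rfl⟩ := h; exact he.choose_spec

lemma mem_comp9 {f g : Word k →. Word k} {x y : Word k} :
    y ∈ (f.comp g) x ↔ ∃ z, z ∈ g x ∧ y ∈ f z := by
  simp [PFun.comp_apply, Part.mem_bind_iff]
  exact Part.mem_bind_iff

lemma isRIH_comp9 {f g : Word k →. Word k} (hf : IsRIH f) (hg : IsRIH g) :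
    IsRIH (f.comp g) := by
  intro x y hy w
  obtain ⟨z, hz, hyz⟩ := mem_comp9.1 hy
  exact mem_comp9.2 ⟨z ++ w, hg x z hz w, hf z y hyz w⟩

end Aux9

section Main9

variable {k : ℕ}

lemma exists_alpha9 {φ₁ φ₂ : Word k →. Word k} (h₁ : IsRIAut φ₁) (h₂ : IsRIAut φ₂)
    (hsub : φ₂.ran ⊆ φ₁.ran) : ∃ α : Word k →. Word k, IsRIAut α ∧ φ₂ = φ₁.comp α := by
  obtain ⟨hRIH₁, hinj₁, hDfg₁, hDes₁, hRfg₁, hRes₁⟩ := h₁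
  obtain ⟨hRIH₂, hinj₂, hDfg₂, hDes₂, hRfg₂, hRes₂⟩ := h₂
  set α : Word k →. Word k := (pinv9 φ₁).comp φ₂ with hα
  have memα : ∀ x z : Word k, z ∈ α x ↔ ∃ y, y ∈ φ₂ x ∧ y ∈ φ₁ z := by
    intro x z
    rw [hα, mem_comp9]
    exact ⟨fun ⟨y, hy, hz⟩ => ⟨y, hy, of_mem_pinv9 hz⟩,
      fun ⟨y, hy, hz⟩ => ⟨y, hy, mem_pinv9_of hinj₁ hz⟩⟩
  have hcompeq : φ₂ = φ₁.comp α := by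
    apply PFun.ext
    intro x y
    constructor
    · intro hy
      obtain ⟨z, hz⟩ := hsub ⟨x, hy⟩
      exact mem_comp9.2 ⟨z, (memα x z).2 ⟨y, hy, hz⟩, hz⟩
    · intro hy
      obtain ⟨z, hz, hyz⟩ := mem_comp9.1 hy
      obtain ⟨y', hy', hy'z⟩ := (memα x z).1 hz
      rwa [Part.mem_unique hyz hy'z]
  have hDomα : α.Dom = φ₂.Dom := by
    ext x
    rw [PFun.mem_dom, PFun.mem_dom]
    constructor
    · rintro ⟨z, hz⟩
      obtain ⟨y, hy, -⟩ := (memα x z).1 hz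
      exact ⟨y, hy⟩
    · rintro ⟨y, hy⟩
      obtain ⟨z, hz⟩ := hsub ⟨x, hy⟩
      exact ⟨z, (memα x z).2 ⟨y, hy, hz⟩⟩
  refine ⟨α, ⟨?_, ?_, ?_, ?_, ?_, ?_⟩, hcompeq⟩
  · -- RIH
    refine isRIH_comp9 ?_ hRIH₂
    intro y x hx w
    exact mem_pinv9_of hinj₁ (hRIH₁ x y (of_mem_pinv9 hx) w)
  · -- injective
    intro x₁ x₂ z hz₁ hz₂
    obtain ⟨y₁, hy₁, hy₁z⟩ := (memα x₁ z).1 hz₁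
    obtain ⟨y₂, hy₂, hy₂z⟩ := (memα x₂ z).1 hz₂
    exact hinj₂ x₁ x₂ y₁ hy₁ (Part.mem_unique hy₂z hy₁z ▸ hy₂)
  · rw [hDomα]; exact hDfg₂
  · rw [hDomα]; exact hDes₂
  · -- ran α finitely generated
    obtain ⟨C, hCfin, hCeq⟩ := hRfg₂
    have hCsub : C ⊆ φ₁.ran := fun c hc => hsub (hCeq ▸ subset_genIdeal C hc)
    classical
    set g : Word k → Word k := fun c => Classical.epsilon fun x => c ∈ φ₁ x with hg
    have hgspec : ∀ c ∈ C, c ∈ φ₁ (g c) := fun c hc =>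
      Classical.epsilon_spec (hCsub hc : ∃ x, c ∈ φ₁ x)
    refine ⟨g '' C, hCfin.image g, ?_⟩
    ext z
    constructor
    · rintro ⟨x, hz⟩
      obtain ⟨y, hy, hyz⟩ := (memα x z).1 hz
      have : y ∈ genIdeal C := hCeq ▸ (⟨x, hy⟩ : y ∈ φ₂.ran)
      obtain ⟨c, hc, w, hw⟩ := this
      have h1 : c ++ w ∈ φ₁ (g c ++ w) := hRIH₁ _ _ (hgspec c hc) w
      rw [hw] at h1
      have : z = g c ++ w := hinj₁ _ _ _ hyz h1
      exact ⟨g c, ⟨c, hc, rfl⟩, w, this.symm⟩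
    · rintro ⟨-, ⟨c, hc, rfl⟩, w, hw⟩
      have h1 : c ++ w ∈ φ₁ z := hw ▸ hRIH₁ _ _ (hgspec c hc) w
      have h2 : c ++ w ∈ φ₂.ran := hCeq ▸ (⟨c, hc, w, rfl⟩ : c ++ w ∈ genIdeal C)
      obtain ⟨x, hx⟩ := h2
      exact ⟨x, (memα x z).2 ⟨c ++ w, hx, h1⟩⟩
  · -- ran α essential
    rintro I hI ⟨z₀, hz₀⟩
    obtain ⟨x, hxD, hxI⟩ := hDes₁ (genIdeal {z₀}) (genIdeal_rightIdeal _)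
      ⟨z₀, subset_genIdeal _ rfl⟩
    obtain ⟨y, hy⟩ := (PFun.mem_dom _ _).1 hxD
    obtain ⟨y', hy'R, hy'I⟩ := hRes₂ (genIdeal {y}) (genIdeal_rightIdeal _)
      ⟨y, subset_genIdeal _ rfl⟩
    obtain ⟨x₂, hx₂⟩ := hy'R
    obtain ⟨c, hc, w, hw⟩ := hy'I
    rw [Set.mem_singleton_iff] at hc
    rw [hc] at hw
    subst hw
    obtain ⟨c', hc', s, hs⟩ := hxI
    rw [Set.mem_singleton_iff] at hc'
    rw [hc'] at hs
    subst hs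
    refine ⟨z₀ ++ s ++ w, ⟨x₂, (memα x₂ (z₀ ++ s ++ w)).2 ⟨y ++ w, hx₂, hRIH₁ _ y hy w⟩⟩, ?_⟩
    rw [List.append_assoc]
    exact hI z₀ hz₀ _

lemma exists_beta9 {φ₁ φ₂ : Word k →. Word k} (h₁ : IsRIAut φ₁) (h₂ : IsRIAut φ₂)
    (hsub : φ₂.Dom ⊆ φ₁.Dom) : ∃ β : Word k →. Word k, IsRIAut β ∧ φ₂ = β.comp φ₁ := by
  obtain ⟨hRIH₁, hinj₁, hDfg₁, hDes₁, hRfg₁, hRes₁⟩ := h₁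
  obtain ⟨hRIH₂, hinj₂, hDfg₂, hDes₂, hRfg₂, hRes₂⟩ := h₂
  have hD₂ri : RightIdeal φ₂.Dom := finGen_rightIdeal hDfg₂
  set β : Word k →. Word k := φ₂.comp (pinv9 φ₁) with hβ
  have memβ : ∀ y₁ y : Word k, y ∈ β y₁ ↔ ∃ z, y₁ ∈ φ₁ z ∧ y ∈ φ₂ z := by
    intro y₁ y
    rw [hβ, mem_comp9]
    exact ⟨fun ⟨z, hz, hy⟩ => ⟨z, of_mem_pinv9 hz, hy⟩,
      fun ⟨z, hz, hy⟩ => ⟨z, mem_pinv9_of hinj₁ hz, hy⟩⟩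
  have hcompeq : φ₂ = β.comp φ₁ := by
    apply PFun.ext
    intro x y
    constructor
    · intro hy
      obtain ⟨y₁, hy₁⟩ := (PFun.mem_dom _ _).1 (hsub ((PFun.mem_dom _ _).2 ⟨y, hy⟩))
      exact mem_comp9.2 ⟨y₁, hy₁, (memβ y₁ y).2 ⟨x, hy₁, hy⟩⟩
    · intro hy
      obtain ⟨y₁, hy₁, hyy₁⟩ := mem_comp9.1 hy
      obtain ⟨z, hz₁, hz₂⟩ := (memβ y₁ y).1 hyy₁
      rwa [hinj₁ x z y₁ hy₁ hz₁]
  have hranβ : β.ran = φ₂.ran := by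
    ext y
    constructor
    · rintro ⟨y₁, hy⟩
      obtain ⟨z, -, hz⟩ := (memβ y₁ y).1 hy
      exact ⟨z, hz⟩
    · rintro ⟨z, hz⟩
      obtain ⟨y₁, hy₁⟩ := (PFun.mem_dom _ _).1 (hsub ((PFun.mem_dom _ _).2 ⟨y, hz⟩))
      exact ⟨y₁, (memβ y₁ y).2 ⟨z, hy₁, hz⟩⟩
  refine ⟨β, ⟨?_, ?_, ?_, ?_, ?_, ?_⟩, hcompeq⟩
  · refine isRIH_comp9 hRIH₂ ?_
    intro y x hx w
    exact mem_pinv9_of hinj₁ (hRIH₁ x y (of_mem_pinv9 hx) w)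
  · intro y₁ y₂ y hy₁ hy₂
    obtain ⟨z₁, hz₁, hz₁'⟩ := (memβ y₁ y).1 hy₁
    obtain ⟨z₂, hz₂, hz₂'⟩ := (memβ y₂ y).1 hy₂
    have : z₁ = z₂ := hinj₂ z₁ z₂ y hz₁' hz₂'
    exact Part.mem_unique hz₁ (this ▸ hz₂)
  · -- Dom β finitely generated
    obtain ⟨C, hCfin, hCeq⟩ := hDfg₂
    have hCsub : C ⊆ φ₁.Dom := fun c hc => hsub (hCeq ▸ subset_genIdeal C hc)
    classical
    set g : Word k → Word k := fun c => Classical.epsilon fun y => y ∈ φ₁ c with hg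
    have hgspec : ∀ c ∈ C, g c ∈ φ₁ c := fun c hc =>
      Classical.epsilon_spec ((PFun.mem_dom _ _).1 (hCsub hc) : ∃ y, y ∈ φ₁ c)
    refine ⟨g '' C, hCfin.image g, ?_⟩
    ext y₁
    constructor
    · intro hmem
      obtain ⟨y, hy⟩ := (PFun.mem_dom _ _).1 hmem
      obtain ⟨z, hz₁, hz₂⟩ := (memβ y₁ y).1 hy
      have : z ∈ genIdeal C := hCeq ▸ (PFun.mem_dom _ _).2 ⟨y, hz₂⟩
      obtain ⟨c, hc, w, hw⟩ := this
      have h1 : g c ++ w ∈ φ₁ (c ++ w) := hRIH₁ _ _ (hgspec c hc) w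
      rw [hw] at h1
      have : y₁ = g c ++ w := Part.mem_unique hz₁ h1
      exact ⟨g c, ⟨c, hc, rfl⟩, w, this.symm⟩
    · rintro ⟨-, ⟨c, hc, rfl⟩, w, hw⟩
      have hcD : c ++ w ∈ φ₂.Dom := hD₂ri c (hCeq ▸ subset_genIdeal C hc) w
      obtain ⟨y, hy⟩ := (PFun.mem_dom _ _).1 hcD
      have h1 : g c ++ w ∈ φ₁ (c ++ w) := hRIH₁ _ _ (hgspec c hc) w
      exact (PFun.mem_dom _ _).2 ⟨y, (memβ y₁ y).2 ⟨c ++ w, hw ▸ h1, hy⟩⟩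
  · -- Dom β essential
    rintro I hI ⟨z₀, hz₀⟩
    obtain ⟨y, hyR, hyI⟩ := hRes₁ (genIdeal {z₀}) (genIdeal_rightIdeal _)
      ⟨z₀, subset_genIdeal _ rfl⟩
    obtain ⟨x, hx⟩ := hyR
    obtain ⟨x', hx'D, hx'I⟩ := hDes₂ (genIdeal {x}) (genIdeal_rightIdeal _)
      ⟨x, subset_genIdeal _ rfl⟩
    obtain ⟨y₂, hy₂⟩ := (PFun.mem_dom _ _).1 hx'D
    obtain ⟨c, hc, w, hw⟩ := hx'I
    rw [Set.mem_singleton_iff] at hc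
    rw [hc] at hw
    subst hw
    obtain ⟨c', hc', s, hs⟩ := hyI
    rw [Set.mem_singleton_iff] at hc'
    rw [hc'] at hs
    subst hs
    refine ⟨z₀ ++ s ++ w,
      (PFun.mem_dom _ _).2 ⟨y₂, (memβ (z₀ ++ s ++ w) y₂).2 ⟨x ++ w, hRIH₁ x _ hx w, hy₂⟩⟩, ?_⟩
    rw [List.append_assoc]
    exact hI z₀ hz₀ _
  · rw [hranβ]; exact hRfg₂
  · rw [hranβ]; exact hRes₂

end Main9

/-- The ℛ- and ℒ-orders of `riAut(k)`:
(i) `φ₂ = φ₁∘α` for some `α ∈ riAut(k)` iff `Im(φ₂) ⊆ Im(φ₁)`;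
(ii) `φ₂ = β∘φ₁` for some `β ∈ riAut(k)` iff `Dom(φ₂) ⊆ Dom(φ₁)`. -/
theorem statement9 (k : ℕ) (hk : 2 ≤ k) (φ₁ φ₂ : Word k →. Word k)
    (h₁ : IsRIAut φ₁) (h₂ : IsRIAut φ₂) :
    ((∃ α : Word k →. Word k, IsRIAut α ∧ φ₂ = φ₁.comp α) ↔ φ₂.ran ⊆ φ₁.ran) ∧
    ((∃ β : Word k →. Word k, IsRIAut β ∧ φ₂ = β.comp φ₁) ↔ φ₂.Dom ⊆ φ₁.Dom) := by
  constructor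
  · constructor
    · rintro ⟨α, -, rfl⟩ y ⟨x, hy⟩
      obtain ⟨z, -, hz⟩ := mem_comp9.1 hy
      exact ⟨z, hz⟩
    · exact exists_alpha9 h₁ h₂
  · constructor
    · rintro ⟨β, -, rfl⟩ x hx
      obtain ⟨y, hy⟩ := (PFun.mem_dom _ _).1 hx
      obtain ⟨z, hz, -⟩ := mem_comp9.1 hy
      exact (PFun.mem_dom _ _).2 ⟨z, hz⟩
    · exact exists_beta9 h₁ h₂
end

section
/- Let P ⊆ A* be a finite maximal prefix code with |P| > 1 + (k-1)(k+1) = k², let z be an inner leaf of P, let ℓ = |{x ∈ P : x <_dict z·a₁}| and r = |{x ∈ P : z·a_k <_dict x}| (so |P| = ℓ + k + r). Then there exists a finite maximal prefix code Q ⊆ A* with |Q| = |P| such that: Q has an inner leaf Z with |{x ∈ Q : x <_dict Z·a₁}| = ℓ and |{x ∈ Q : Z·a_k <_dict x}| = r, and Q has a second inner leaf Z' ≠ Z. -/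
/-- An inner leaf of a maximal prefix code `P`: an inner vertex all of whose
children lie in `P`. -/
def InnerLeaf {k : ℕ} (P : Set (Word k)) (z : Word k) : Prop :=
  z ∈ spref P ∧ ∀ a : Fin k, z ++ [a] ∈ P

section Helpers
variable {k : ℕ}

lemma lex_append_iff {u v w : Word k} :
    List.Lex (· < ·) (u ++ v) (u ++ w) ↔ List.Lex (· < ·) v w := by
  induction u with
  | nil => rfl
  | cons a u ih => simpa [List.lex_cons_iff] using ih

lemma dictLt_asymm {u v : Word k} (h : dictLt u v) : ¬ dictLt v u :=
  (List.Lex.asymm (α := Fin k) (· < ·)).asymm _ _ h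

lemma dictLt_trans {u v w : Word k} (h : dictLt u v) (h' : dictLt v w) : dictLt u w := by
  have t : IsTrans (Word k) (List.Lex (· < ·)) :=
    ⟨fun _ _ _ h1 h2 => List.lex_trans (fun x y => lt_trans x y) h1 h2⟩
  exact t.trans _ _ _ h h'

lemma dictLt_trichotomy (u v : Word k) :
    dictLt u v ∨ u = v ∨ dictLt v u :=
  trichotomous_of (List.Lex (α := Fin k) (· < ·)) u v

lemma dictLt_irrefl (u : Word k) : ¬ dictLt u u := fun h => dictLt_asymm h h

/-- Decomposition of two prefix-incomparable words. -/
lemma incomp_decomp {u v : Word k} (h1 : ¬ u <+: v) (h2 : ¬ v <+: u) :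
    ∃ (c : Word k) (a b : Fin k) (x y : Word k),
      a ≠ b ∧ u = c ++ a :: x ∧ v = c ++ b :: y := by
  induction u generalizing v with
  | nil => exact absurd (List.nil_prefix) h1
  | cons a u ih =>
    cases v with
    | nil => exact absurd (List.nil_prefix) h2
    | cons b v =>
      by_cases hab : a = b
      · subst hab
        have h1' : ¬ u <+: v := fun h => h1 (List.prefix_cons_inj a |>.mpr h)
        have h2' : ¬ v <+: u := fun h => h2 (List.prefix_cons_inj a |>.mpr h)
        obtain ⟨c, a', b', x, y, hne, hu, hv⟩ := ih h1' h2'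
        exact ⟨a :: c, a', b', x, y, hne, by simp [hu], by simp [hv]⟩
      · exact ⟨[], a, b, u, v, hab, rfl, rfl⟩

lemma dictLt_of_incomp_lt {c : Word k} {a b : Fin k} {x y : Word k} (hab : a < b) :
    dictLt (c ++ a :: x) (c ++ b :: y) := by
  exact lex_append_iff.mpr (List.Lex.rel hab)

end Helpers

section Tree
variable {k : ℕ}

lemma prefix_concat_cases {u w : Word k} {a : Fin k} (h : u <+: w ++ [a]) :
    u = w ++ [a] ∨ u <+: w := by
  obtain ⟨s, hs⟩ := h
  rcases List.eq_nil_or_concat s with rfl | ⟨s', b, rfl⟩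
  · left; simpa using hs
  · right
    rw [List.concat_eq_append, ← List.append_assoc] at hs
    obtain ⟨h1, _⟩ := List.append_inj' hs (by simp)
    exact ⟨s', h1⟩

lemma exists_comparable {P : Set (Word k)} (h : MaxPrefixCode P) (x : Word k) :
    ∃ p ∈ P, p <+: x ∨ x <+: p := by
  by_contra hc
  push_neg at hc
  have hpc : PrefixCode (insert x P) := by
    intro u hu v hv huv
    rcases hu with rfl | hu <;> rcases hv with rfl | hv
    · rfl
    · exact absurd huv (hc v hv).2
    · exact absurd huv (hc u hu).1
    · exact h.1 u hu v hv huv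
  have hins := h.2 _ hpc (Set.subset_insert _ _)
  have hx : x ∈ P := hins ▸ Set.mem_insert x P
  exact (hc x hx).1 (List.prefix_refl x)

lemma maxPC_of_comparable {Q : Set (Word k)} (hpc : PrefixCode Q)
    (hcomp : ∀ x, ∃ q ∈ Q, q <+: x ∨ x <+: q) : MaxPrefixCode Q := by
  refine ⟨hpc, fun Q' hQ' hsub => Set.Subset.antisymm hsub fun x hx => ?_⟩
  obtain ⟨q, hq, hcase⟩ := hcomp x
  rcases hcase with h | h
  · have := hQ' q (hsub hq) x hx h; exact this ▸ hq
  · have := hQ' x hx q (hsub hq) h; exact this ▸ hq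

/-- children of a set of words -/
def childSet (I : Set (Word k)) : Set (Word k) := {x | ∃ w ∈ I, ∃ a : Fin k, x = w ++ [a]}

lemma tree_prefixCode {I : Set (Word k)}
    (hcl : ∀ u v : Word k, u <+: v → v ∈ I → u ∈ I) :
    PrefixCode (childSet I \ I) := by
  intro u hu v hv huv
  obtain ⟨⟨w, hw, a, rfl⟩, _⟩ := hv
  rcases prefix_concat_cases huv with rfl | h
  · rfl
  · exact absurd (hcl u w h hw) hu.2

lemma tree_comparable (hk : 0 < k) {I : Set (Word k)} (hfin : I.Finite)
    (hε : ([] : Word k) ∈ I) (hcl : ∀ u v : Word k, u <+: v → v ∈ I → u ∈ I) :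
    ∀ x : Word k, ∃ q ∈ childSet I \ I, q <+: x ∨ x <+: q := by
  classical
  intro x
  set S : Set (Word k) := {u ∈ I | u <+: x} with hS
  have hSfin : S.Finite := hfin.subset fun u hu => hu.1
  have hSne : S.Nonempty := ⟨[], hε, List.nil_prefix⟩
  obtain ⟨w, hwS, hwmax⟩ := Set.Finite.exists_maximalFor List.length S hSfin hSne
  by_cases hwx : w = x
  · -- x ∈ I; extend by zeros
    have hxI : x ∈ I := hwx ▸ hwS.1
    have hex : ∃ n, x ++ List.replicate n (⟨0, hk⟩ : Fin k) ∉ I := by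
      by_contra hall
      push_neg at hall
      have : I.Infinite := Set.infinite_of_injective_forall_mem
        (f := fun n => x ++ List.replicate n (⟨0, hk⟩ : Fin k))
        (fun m n hmn => by
          have := congrArg List.length hmn
          simpa using this) hall
      exact this hfin
    set n := Nat.find hex with hn
    have hnI : x ++ List.replicate n (⟨0, hk⟩ : Fin k) ∉ I := Nat.find_spec hex
    have hnpos : n ≠ 0 := by
      intro h0
      rw [h0] at hnI
      simp at hnI
      exact hnI hxI
    have hprev : x ++ List.replicate (n - 1) (⟨0, hk⟩ : Fin k) ∈ I := by
      have h2 := Nat.find_min hex (m := n - 1) (by omega)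
      simpa using h2
    refine ⟨(x ++ List.replicate (n - 1) (⟨0, hk⟩ : Fin k)) ++ [⟨0, hk⟩], ⟨⟨_, hprev, _, rfl⟩, ?_⟩,
      Or.inr ?_⟩
    · have : (x ++ List.replicate (n - 1) (⟨0, hk⟩ : Fin k)) ++ [⟨0, hk⟩]
          = x ++ List.replicate n (⟨0, hk⟩ : Fin k) := by
        rw [List.append_assoc, ← List.replicate_succ' (n := n - 1)]
        congr 2
        omega
      rw [this]; exact hnI
    · exact (List.prefix_append x _).trans (List.prefix_append _ _)
  · obtain ⟨s, hs⟩ := hwS.2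
    have hsne : s ≠ [] := fun h => hwx (by simpa [h] using hs)
    obtain ⟨c, s', rfl⟩ := List.exists_cons_of_ne_nil hsne
    have hqx : w ++ [c] <+: x := ⟨s', by simpa using hs⟩
    have hqI : w ++ [c] ∉ I := by
      intro hqI
      have := hwmax (j := w ++ [c]) ⟨hqI, hqx⟩ (by simp)
      simp at this
    exact ⟨w ++ [c], ⟨⟨w, hwS.1, c, rfl⟩, hqI⟩, Or.inl hqx⟩

lemma tree_maxPC (hk : 0 < k) {I : Set (Word k)} (hfin : I.Finite)
    (hε : ([] : Word k) ∈ I) (hcl : ∀ u v : Word k, u <+: v → v ∈ I → u ∈ I) :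
    MaxPrefixCode (childSet I \ I) :=
  maxPC_of_comparable (tree_prefixCode hcl) (tree_comparable hk hfin hε hcl)

end Tree

section Pside
variable {k : ℕ}

lemma pref_finite {P : Set (Word k)} (hfin : P.Finite) : (pref P).Finite := by
  have hsub : pref P ⊆ ⋃ p ∈ P, {u : Word k | u <+: p} := by
    rintro u ⟨v, hv, huv⟩
    exact Set.mem_biUnion hv huv
  refine Set.Finite.subset (Set.Finite.biUnion hfin fun p _ => ?_) hsub
  have : {u : Word k | u <+: p} ⊆ Set.range (fun i : Fin (p.length + 1) => p.take i) := by
    intro u hu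
    exact ⟨⟨u.length, by have := hu.length_le; omega⟩, (List.prefix_iff_eq_take.mp hu).symm⟩
  exact Set.Finite.subset (Set.finite_range _) this

lemma spref_closed {P : Set (Word k)} (hpc : PrefixCode P) :
    ∀ u v : Word k, u <+: v → v ∈ spref P → u ∈ spref P := by
  rintro u v huv ⟨⟨p, hp, hvp⟩, hvP⟩
  have hup : u <+: p := huv.trans hvp
  refine ⟨⟨p, hp, hup⟩, fun huP => ?_⟩
  have : u = p := hpc u huP p hp hup
  subst this
  obtain ⟨s, hs⟩ := hvp
  obtain ⟨t, ht⟩ := huv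
  have : v = u := by
    have h1 := congrArg List.length hs
    have h2 := congrArg List.length ht
    simp at h1 h2
    have : t = [] := by
      apply List.eq_nil_of_length_eq_zero
      omega
    simpa [this] using ht.symm
  exact hvP (this ▸ hp)

lemma nil_not_mem {P : Set (Word k)} (hpc : PrefixCode P) (h2 : 1 < P.ncard) :
    ([] : Word k) ∉ P := by
  intro hnil
  obtain ⟨b, hb, hne⟩ := Set.exists_ne_of_one_lt_ncard h2 []
  exact hne (hpc [] hnil b hb List.nil_prefix).symm

lemma child_spref {P : Set (Word k)} (hmax : MaxPrefixCode P) :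
    childSet (spref P) = pref P \ {[]} := by
  ext u
  constructor
  · rintro ⟨w, hw, a, rfl⟩
    refine ⟨?_, by simp⟩
    obtain ⟨p, hp, hcomp⟩ := exists_comparable hmax (w ++ [a])
    rcases hcomp with h | h
    · rcases prefix_concat_cases h with rfl | h2
      · exact ⟨_, hp, List.prefix_refl _⟩
      · -- p <+: w, w ∈ spref P : contradiction
        obtain ⟨⟨p', hp', hwp'⟩, hwP⟩ := hw
        have : p = p' := hmax.1 p hp p' hp' (h2.trans hwp')
        subst this
        have : w = p := hwp'.eq_of_length_le h2.length_le ▸ rfl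
        exact absurd (this ▸ hp) hwP
    · exact ⟨p, hp, h⟩
  · rintro ⟨⟨p, hp, hup⟩, hu⟩
    simp only [Set.mem_singleton_iff] at hu
    obtain ⟨w, a, hu'⟩ := List.eq_nil_or_concat u |>.resolve_left hu
    rw [List.concat_eq_append] at hu'
    subst hu'
    refine ⟨w, ⟨⟨p, hp, (List.prefix_append w [a]).trans hup⟩, fun hwP => ?_⟩, a, rfl⟩
    have hwp : w <+: p := (List.prefix_append w [a]).trans hup
    have : w = p := hmax.1 w hwP p hp hwp
    subst this
    have := hup.length_le
    simp at this
end Pside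

section Card
variable {k : ℕ}

lemma ncard_childSet {I : Set (Word k)} (hfin : I.Finite) :
    (childSet I).ncard = k * I.ncard := by
  have himg : childSet I = (fun p : Word k × Fin k => p.1 ++ [p.2]) ''
      (I ×ˢ (Set.univ : Set (Fin k))) := by
    ext x
    simp only [childSet, Set.mem_image, Set.mem_prod, Set.mem_univ, and_true, Prod.exists,
      Set.mem_setOf_eq]
    constructor
    · rintro ⟨w, hw, a, rfl⟩; exact ⟨w, a, hw, rfl⟩
    · rintro ⟨w, a, hw, rfl⟩; exact ⟨w, hw, a, rfl⟩
  have hinj : Function.Injective (fun p : Word k × Fin k => p.1 ++ [p.2]) := by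
    rintro ⟨w, a⟩ ⟨w', a'⟩ h
    simp only at h
    obtain ⟨h1, h2⟩ := List.append_inj h (by
      have := congrArg List.length h
      simpa using this)
    simp at h2
    simp [h1, h2]
  rw [himg, Set.ncard_image_of_injective _ hinj]
  rw [← Nat.card_coe_set_eq]
  rw [Nat.card_congr (Equiv.Set.prod I Set.univ)]
  rw [Nat.card_prod]
  rw [Nat.card_coe_set_eq, Nat.card_coe_set_eq, Set.ncard_univ]
  simp [Nat.card_eq_fintype_card, mul_comm]

lemma card_formula (hk : 1 ≤ k) {P : Set (Word k)} (hfin : P.Finite)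
    (hmax : MaxPrefixCode P) (hne : P.Nonempty) :
    P.ncard = (k - 1) * (spref P).ncard + 1 := by
  obtain ⟨p0, hp0⟩ := hne
  have hJfin : (pref P).Finite := pref_finite hfin
  have hIfin : (spref P).Finite := hJfin.subset fun u hu => hu.1
  have hPJ : P ⊆ pref P := fun p hp => ⟨p, hp, List.prefix_refl p⟩
  have hsplit : (spref P).ncard + P.ncard = (pref P).ncard :=
    Set.ncard_diff_add_ncard_of_subset hPJ hJfin
  have hnilJ : ([] : Word k) ∈ pref P := ⟨p0, hp0, List.nil_prefix⟩
  have hchild : (childSet (spref P)).ncard = (pref P).ncard - 1 := by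
    rw [child_spref hmax]
    exact Set.ncard_diff_singleton_of_mem hnilJ
  have hchild2 : (childSet (spref P)).ncard = k * (spref P).ncard := ncard_childSet hIfin
  have hJpos : 0 < (pref P).ncard := (Set.ncard_pos hJfin).mpr ⟨[], hnilJ⟩
  have hmul : (k - 1) * (spref P).ncard = k * (spref P).ncard - (spref P).ncard := by
    rw [Nat.sub_mul, one_mul]
  have hle : (spref P).ncard ≤ k * (spref P).ncard := Nat.le_mul_of_pos_left _ (by omega)
  omega

end Card

section Partition
variable {k : ℕ}

lemma dictLt_append_single {c : Word k} {a b : Fin k} {x y : Word k} (hab : a < b) :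
    dictLt (c ++ a :: x) (c ++ b :: y) :=
  lex_append_iff.mpr (List.Lex.rel hab)

lemma not_dictLt_child {z : Word k} {a b : Fin k} (h : ¬ a < b) :
    ¬ dictLt (z ++ [a]) (z ++ [b]) := by
  intro hlt
  rw [dictLt, lex_append_iff, List.lex_singleton_iff] at hlt
  exact h hlt

lemma P_partition {P : Set (Word k)} (hfin : P.Finite) (hmax : MaxPrefixCode P)
    {z : Word k} (hz : InnerLeaf P z) (a0 ak : Fin k) (h0 : (a0 : ℕ) = 0)
    (hk' : (ak : ℕ) = k - 1) :
    P.ncard = {x ∈ P | dictLt x (z ++ [a0])}.ncard + k + {x ∈ P | dictLt (z ++ [ak]) x}.ncard := by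
  classical
  set L := {x ∈ P | dictLt x (z ++ [a0])} with hL
  set R := {x ∈ P | dictLt (z ++ [ak]) x} with hR
  set M := Set.range (fun a : Fin k => z ++ [a]) with hM
  have hMP : M ⊆ P := by rintro x ⟨a, rfl⟩; exact hz.2 a
  obtain ⟨⟨p, hp, hzp⟩, hzP⟩ := hz.1
  -- cover
  have hcover : P = L ∪ (M ∪ R) := by
    ext x
    constructor
    · intro hx
      by_cases hMx : ∃ a : Fin k, x = z ++ [a]
      · obtain ⟨a, rfl⟩ := hMx
        exact Or.inr (Or.inl ⟨a, rfl⟩)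
      · have hzx : ¬ z <+: x := by
          intro ⟨s, hs⟩
          have hsne : s ≠ [] := by
            rintro rfl
            simp at hs
            subst hs
            exact hzP hx
          obtain ⟨a, s', rfl⟩ := List.exists_cons_of_ne_nil hsne
          have h1 : z ++ [a] <+: x := ⟨s', by simpa using hs⟩
          have := hmax.1 (z ++ [a]) (hz.2 a) x hx h1
          exact hMx ⟨a, this.symm⟩
        have hxz : ¬ x <+: z := by
          intro hxz
          have hxp : x <+: p := hxz.trans hzp
          have : x = p := hmax.1 x hx p hp hxp
          subst this
          have : z = x := hzp.eq_of_length_le hxz.length_le ▸ rfl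
          exact hzP (this ▸ hx)
        obtain ⟨c, a, b, x', y', hab, hxe, hze⟩ := incomp_decomp hxz hzx
        rcases lt_or_gt_of_ne hab with h | h
        · left
          refine ⟨hx, ?_⟩
          rw [hxe, hze, List.append_assoc]
          exact dictLt_append_single h
        · right; right
          refine ⟨hx, ?_⟩
          rw [hxe, hze, List.append_assoc]
          exact dictLt_append_single h
    · rintro (h | h | h)
      · exact h.1
      · exact hMP h
      · exact h.1
  have hLP : L ⊆ P := fun x hx => hx.1
  have hRP : R ⊆ P := fun x hx => hx.1
  have hLfin : L.Finite := hfin.subset hLP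
  have hRfin : R.Finite := hfin.subset hRP
  have hMfin : M.Finite := hfin.subset hMP
  have hMR : Disjoint M R := by
    rw [Set.disjoint_left]
    rintro x ⟨a, rfl⟩ hxR
    have := hxR.2
    rw [dictLt, lex_append_iff, List.lex_singleton_iff, Fin.lt_def, hk'] at this
    have := a.isLt
    omega
  have hLMR : Disjoint L (M ∪ R) := by
    rw [Set.disjoint_left]
    rintro x hxL (⟨a, rfl⟩ | hxR)
    · have := hxL.2
      rw [dictLt, lex_append_iff, List.lex_singleton_iff, Fin.lt_def, h0] at this
      omega
    · have := dictLt_trans hxR.2 hxL.2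
      rw [dictLt, lex_append_iff, List.lex_singleton_iff, Fin.lt_def, h0, hk'] at this
      omega
  have hMcard : M.ncard = k := by
    have hinj : Function.Injective (fun a : Fin k => z ++ [a]) := by
      intro a b h
      simpa using h
    rw [hM, ← Set.image_univ, Set.ncard_image_of_injective _ hinj, Set.ncard_univ]
    simp
  rw [hcover, Set.ncard_union_eq hLMR hLfin (hMfin.union hRfin),
    Set.ncard_union_eq hMR hMfin hRfin, hMcard]
  ring
end Partition

section ConsHelp
variable {k : ℕ}

lemma rep_split {σ : Fin k} {i q : ℕ} (h : i < q) :
    List.replicate q σ = List.replicate i σ ++ σ :: List.replicate (q - i - 1) σ := by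
  conv_lhs => rw [show q = i + (1 + (q - i - 1)) by omega]
  rw [List.replicate_add, List.replicate_add]
  simp

lemma rep_concat_inj {σ : Fin k} {i i' : ℕ} {j j' : Fin k}
    (h : List.replicate i σ ++ [j] = List.replicate i' σ ++ [j']) : i = i' ∧ j = j' := by
  have hlen : i = i' := by
    have := congrArg List.length h
    simpa using this
  subst hlen
  have := List.append_cancel_left h
  simp at this
  exact ⟨rfl, this⟩

lemma rep_ne_rep_concat {σ τ : Fin k} (hτσ : τ ≠ σ) (i q : ℕ) {s : Word k} :
    List.replicate i σ ≠ List.replicate q σ ++ τ :: s := by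
  intro h
  have : τ ∈ List.replicate i σ := by
    rw [h]
    exact List.mem_append_right _ List.mem_cons_self
  exact hτσ (List.eq_of_mem_replicate this)

lemma prefix_rep {σ : Fin k} {u : Word k} {n : ℕ} (h : u <+: List.replicate n σ) :
    u = List.replicate u.length σ ∧ u.length ≤ n := by
  refine ⟨List.eq_replicate_of_mem fun b hb => ?_, by simpa using h.length_le⟩
  exact List.eq_of_mem_replicate (h.sublist.subset hb)

end ConsHelp

section Core
variable {k : ℕ}

lemma construction_core (hk : 2 ≤ k) (q p t : ℕ) (hp : 1 ≤ p) (ht : t < k - 1)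
    (a0 ak : Fin k) (h0 : (a0 : ℕ) = 0) (hak : (ak : ℕ) = k - 1) :
    ∃ Q : Set (Word k), Q.Finite ∧ MaxPrefixCode Q ∧
      Q.ncard = ((k-1) * q + t) + k + ((k-1) * (p+1) - t) ∧
      ∃ Z : Word k, InnerLeaf Q Z ∧
        {x ∈ Q | dictLt x (Z ++ [a0])}.ncard = (k-1) * q + t ∧
        {x ∈ Q | dictLt (Z ++ [ak]) x}.ncard = (k-1) * (p+1) - t ∧
        ∃ Z' : Word k, Z' ≠ Z ∧ InnerLeaf Q Z' := by
  classical
  set σ : Fin k := ak with hσ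
  set τ : Fin k := ⟨t, by omega⟩ with hτ
  have hσv : (σ : ℕ) = k - 1 := hak
  have hτv : (τ : ℕ) = t := rfl
  have hτσ : τ ≠ σ := by
    intro h
    apply_fun Fin.val at h
    omega
  have hτltσ : τ < σ := by rw [Fin.lt_def]; omega
  set rep : ℕ → Word k := fun i => List.replicate i σ with hrep
  have hrepl : ∀ i, (rep i).length = i := fun i => by simp [hrep]
  set Z : Word k := rep q ++ [τ] with hZ
  set I : Set (Word k) := rep '' (Set.Iic (q+p)) ∪ {Z} with hI
  set Q : Set (Word k) := childSet I \ I with hQdef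
  have hIfin : I.Finite := ((Set.finite_Iic _).image _).union (Set.finite_singleton _)
  have hεI : ([] : Word k) ∈ I := Or.inl ⟨0, by simp, rfl⟩
  have hIcl : ∀ u v : Word k, u <+: v → v ∈ I → u ∈ I := by
    rintro u v huv (⟨i, hi, rfl⟩ | hv)
    · obtain ⟨hu, hle⟩ := prefix_rep huv
      simp only [Set.mem_Iic] at hi
      exact Or.inl ⟨u.length, by simp only [Set.mem_Iic]; omega, hu.symm⟩
    · simp only [Set.mem_singleton_iff] at hv; subst hv
      rcases prefix_concat_cases huv with rfl | h
      · exact Or.inr rfl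
      · obtain ⟨hu, hle⟩ := prefix_rep h
        exact Or.inl ⟨u.length, by simp only [Set.mem_Iic]; omega, hu.symm⟩
  have hmaxQ : MaxPrefixCode Q := tree_maxPC (by omega) hIfin hεI hIcl
  -- membership characterizations
  have hrep_mem_I : ∀ (i : ℕ) (j : Fin k),
      (rep i ++ [j] ∈ I) ↔ ((j = σ ∧ i < q + p) ∨ (i = q ∧ j = τ)) := by
    intro i j
    constructor
    · rintro (⟨i', hi', he⟩ | he)
      · simp only [Set.mem_Iic] at hi'
        by_cases hjσ : j = σ
        · subst hjσ
          left
          refine ⟨rfl, ?_⟩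
          have h2 : rep i' = rep (i + 1) := by
            rw [he, hrep]
            simp [List.replicate_succ']
            rfl
          have := congrArg List.length h2
          simp [hrep] at this
          omega
        · exfalso
          have hjm : j ∈ rep i' := by rw [he]; exact List.mem_append_right _ (by simp)
          exact hjσ (List.eq_of_mem_replicate (by simpa [hrep] using hjm))
      · simp only [Set.mem_singleton_iff] at he
        rw [hZ] at he
        obtain ⟨h1, h2⟩ := rep_concat_inj (σ := σ) (by simpa [hrep] using he)
        exact Or.inr ⟨h1, h2⟩
    · rintro (⟨rfl, hlt⟩ | ⟨rfl, rfl⟩)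
      · exact Or.inl ⟨i + 1, by simp only [Set.mem_Iic]; omega,
          by rw [hrep]; simp [List.replicate_succ']; rfl⟩
      · exact Or.inr rfl
  have hZj_not_I : ∀ j : Fin k, Z ++ [j] ∉ I := by
    rintro j (⟨i', _, he⟩ | he)
    · rw [hZ, List.append_assoc] at he
      exact rep_ne_rep_concat hτσ i' q (by simpa [hrep] using he)
    · simp only [Set.mem_singleton_iff] at he
      have := congrArg List.length he
      simp at this
  have hmem_child : ∀ x, x ∈ childSet I ↔
      ((∃ i ≤ q+p, ∃ j : Fin k, x = rep i ++ [j]) ∨ (∃ j : Fin k, x = Z ++ [j])) := by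
    intro x
    constructor
    · rintro ⟨w, (⟨i, hi, rfl⟩ | hw), a, rfl⟩
      · exact Or.inl ⟨i, by simpa using hi, a, rfl⟩
      · simp only [Set.mem_singleton_iff] at hw; subst hw; exact Or.inr ⟨a, rfl⟩
    · rintro (⟨i, hi, j, rfl⟩ | ⟨j, rfl⟩)
      · exact ⟨rep i, Or.inl ⟨i, by simpa using hi, rfl⟩, j, rfl⟩
      · exact ⟨Z, Or.inr rfl, j, rfl⟩
  have hmem_Q : ∀ x, x ∈ Q ↔
      ((∃ i, ∃ j : Fin k, x = rep i ++ [j] ∧ i ≤ q+p ∧ ¬(j = σ ∧ i < q + p) ∧ ¬(i = q ∧ j = τ))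
        ∨ (∃ j : Fin k, x = Z ++ [j])) := by
    intro x
    rw [hQdef, Set.mem_diff, hmem_child]
    constructor
    · rintro ⟨(⟨i, hi, j, rfl⟩ | ⟨j, rfl⟩), hnI⟩
      · exact Or.inl ⟨i, j, rfl, hi, fun hc => hnI ((hrep_mem_I i j).mpr (Or.inl hc)),
          fun hc => hnI ((hrep_mem_I i j).mpr (Or.inr hc))⟩
      · exact Or.inr ⟨j, rfl⟩
    · rintro (⟨i, j, rfl, hi, h1, h2⟩ | ⟨j, rfl⟩)
      · refine ⟨Or.inl ⟨i, hi, j, rfl⟩, fun hmem => ?_⟩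
        rcases (hrep_mem_I i j).mp hmem with h | h
        exacts [h1 h, h2 h]
      · exact ⟨Or.inr ⟨j, rfl⟩, hZj_not_I j⟩
  -- dictionary facts
  have hZa0 : Z ++ [a0] = rep q ++ (τ :: [a0]) := by rw [hZ, List.append_assoc]; rfl
  have hZak : Z ++ [ak] = rep q ++ (τ :: [ak]) := by rw [hZ, List.append_assoc]; rfl
  have hjσ_lt : ∀ j : Fin k, j ≠ σ → j < σ := by
    intro j hj
    rw [Fin.lt_def]
    have h1 := j.isLt
    have h2 : (j : ℕ) ≠ (σ : ℕ) := fun hc => hj (Fin.val_injective hc)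
    omega
  have F1a : ∀ i, i < q → ∀ j : Fin k, j ≠ σ → dictLt (rep i ++ [j]) (Z ++ [a0]) := by
    intro i hi j hj
    rw [hZa0, show rep q = rep i ++ σ :: List.replicate (q - i - 1) σ from rep_split hi,
      List.append_assoc, List.cons_append]
    exact lex_append_iff.mpr (List.Lex.rel (hjσ_lt j hj))
  have F1b : ∀ j : Fin k, j < τ → dictLt (rep q ++ [j]) (Z ++ [a0]) := by
    intro j hj
    rw [hZa0]
    exact lex_append_iff.mpr (List.Lex.rel hj)
  have F2a : ∀ j : Fin k, τ < j → dictLt (Z ++ [ak]) (rep q ++ [j]) := by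
    intro j hj
    rw [hZak]
    exact lex_append_iff.mpr (List.Lex.rel hj)
  have F2b : ∀ i, q < i → ∀ j : Fin k, dictLt (Z ++ [ak]) (rep i ++ [j]) := by
    intro i hi j
    rw [hZak, show rep i = rep q ++ σ :: List.replicate (i - q - 1) σ from rep_split hi,
      List.append_assoc, List.cons_append]
    exact lex_append_iff.mpr (List.Lex.rel hτltσ)
  have F3a : ∀ j : Fin k, ¬ dictLt (Z ++ [j]) (Z ++ [a0]) := by
    intro j
    apply not_dictLt_child
    rw [Fin.lt_def]
    omega
  have F3b : ∀ j : Fin k, ¬ dictLt (Z ++ [ak]) (Z ++ [j]) := by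
    intro j
    apply not_dictLt_child
    rw [Fin.lt_def]
    have := j.isLt
    omega
  have F4 : ∀ x, dictLt x (Z ++ [a0]) → dictLt (Z ++ [ak]) x → False := by
    intro x h1 h2
    exact F3a ak (dictLt_trans h2 h1)
  -- the three finsets
  obtain ⟨p', rfl⟩ : ∃ p', p = p' + 1 := ⟨p - 1, by omega⟩
  set Lfin : Finset (Word k) :=
    (Finset.range q).biUnion (fun i =>
      (Finset.univ.filter (fun j : Fin k => j ≠ σ)).image (fun j => rep i ++ [j]))
    ∪ (Finset.univ.filter (fun j : Fin k => j < τ)).image (fun j => rep q ++ [j]) with hLf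
  set Mfin : Finset (Word k) := Finset.univ.image (fun j : Fin k => Z ++ [j]) with hMf
  set Rfin : Finset (Word k) :=
    ((Finset.univ.filter (fun j : Fin k => τ < j ∧ j ≠ σ)).image (fun j => rep q ++ [j])
    ∪ (Finset.Ico (q+1) (q+p'+1)).biUnion (fun i =>
      (Finset.univ.filter (fun j : Fin k => j ≠ σ)).image (fun j => rep i ++ [j])))
    ∪ Finset.univ.image (fun j : Fin k => rep (q+p'+1) ++ [j]) with hRf
  have hqp : q + (p' + 1) = q + p' + 1 := by omega
  rw [hqp] at hmem_Q hrep_mem_I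
  have hinj : ∀ w : Word k, Function.Injective (fun j : Fin k => w ++ [j]) := by
    intro w a b h
    simpa using h
  have hci : ∀ {i i' : ℕ} {j j' : Fin k}, rep i ++ [j] = rep i' ++ [j'] → i = i' ∧ j = j' := by
    intro i i' j j' h
    simp only [hrep] at h
    exact rep_concat_inj h
  have hmemL : ∀ x, x ∈ Lfin ↔
      ((∃ i, i < q ∧ ∃ j : Fin k, j ≠ σ ∧ rep i ++ [j] = x)
        ∨ (∃ j : Fin k, j < τ ∧ rep q ++ [j] = x)) := by
    intro x
    simp [hLf]
  have hmemM : ∀ x, x ∈ Mfin ↔ (∃ j : Fin k, Z ++ [j] = x) := by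
    intro x
    simp [hMf]
  have hmemR : ∀ x, x ∈ Rfin ↔
      ((∃ j : Fin k, (τ < j ∧ j ≠ σ) ∧ rep q ++ [j] = x)
        ∨ (∃ i, (q + 1 ≤ i ∧ i < q + p' + 1) ∧ ∃ j : Fin k, j ≠ σ ∧ rep i ++ [j] = x)
        ∨ (∃ j : Fin k, rep (q+p'+1) ++ [j] = x)) := by
    intro x
    simp [hRf]
  -- dict facts aggregated
  have hF1 : ∀ x ∈ Lfin, dictLt x (Z ++ [a0]) := by
    intro x hx
    rcases (hmemL x).mp hx with ⟨i, hi, j, hj, rfl⟩ | ⟨j, hj, rfl⟩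
    · exact F1a i hi j hj
    · exact F1b j hj
  have hF2 : ∀ x ∈ Rfin, dictLt (Z ++ [ak]) x := by
    intro x hx
    rcases (hmemR x).mp hx with ⟨j, ⟨hj1, _⟩, rfl⟩ | ⟨i, ⟨hi1, _⟩, j, _, rfl⟩ | ⟨j, rfl⟩
    · exact F2a j hj1
    · exact F2b i (by omega) j
    · exact F2b (q+p'+1) (by omega) j
  -- subsets of Q
  have hLQ : ∀ x ∈ Lfin, x ∈ Q := by
    intro x hx
    rcases (hmemL x).mp hx with ⟨i, hi, j, hj, rfl⟩ | ⟨j, hj, rfl⟩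
    · exact (hmem_Q _).mpr (Or.inl ⟨i, j, rfl, by omega, fun hc => hj hc.1, fun hc => by omega⟩)
    · refine (hmem_Q _).mpr (Or.inl ⟨q, j, rfl, by omega, fun hc => ?_, fun hc => ?_⟩)
      · exact absurd hτltσ (lt_asymm (hc.1 ▸ hj))
      · exact absurd (hc.2 ▸ hj) (lt_irrefl τ)
  have hMQ : ∀ x ∈ Mfin, x ∈ Q := by
    intro x hx
    obtain ⟨j, rfl⟩ := (hmemM x).mp hx
    exact (hmem_Q _).mpr (Or.inr ⟨j, rfl⟩)
  have hRQ : ∀ x ∈ Rfin, x ∈ Q := by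
    intro x hx
    rcases (hmemR x).mp hx with ⟨j, ⟨hj1, hj2⟩, rfl⟩ | ⟨i, ⟨hi1, hi2⟩, j, hj, rfl⟩ | ⟨j, rfl⟩
    · exact (hmem_Q _).mpr (Or.inl ⟨q, j, rfl, by omega, fun hc => hj2 hc.1,
        fun hc => absurd (hc.2 ▸ hj1) (lt_irrefl τ)⟩)
    · exact (hmem_Q _).mpr (Or.inl ⟨i, j, rfl, by omega, fun hc => hj hc.1, fun hc => by omega⟩)
    · exact (hmem_Q _).mpr (Or.inl ⟨q+p'+1, j, rfl, le_refl _, fun hc => by omega,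
        fun hc => by omega⟩)
  -- cover
  have hcover : ∀ x ∈ Q, x ∈ Lfin ∨ x ∈ Mfin ∨ x ∈ Rfin := by
    intro x hx
    rcases (hmem_Q x).mp hx with ⟨i, j, rfl, hi, h1, h2⟩ | ⟨j, rfl⟩
    · by_cases hiq : i < q
      · exact Or.inl ((hmemL _).mpr (Or.inl ⟨i, hiq, j, fun hjσ => h1 ⟨hjσ, by omega⟩, rfl⟩))
      · by_cases hieq : i = q
        · subst hieq
          have hjτ : j ≠ τ := fun hc => h2 ⟨rfl, hc⟩
          by_cases hjlt : j < τ
          · exact Or.inl ((hmemL _).mpr (Or.inr ⟨j, hjlt, rfl⟩))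
          · have hτj : τ < j := by
              rcases lt_trichotomy j τ with h | h | h
              exacts [absurd h hjlt, absurd h hjτ, h]
            have hjσ : j ≠ σ := fun hc => h1 ⟨hc, by omega⟩
            exact Or.inr (Or.inr ((hmemR _).mpr (Or.inl ⟨j, ⟨hτj, hjσ⟩, rfl⟩)))
        · by_cases hitop : i = q + p' + 1
          · subst hitop
            exact Or.inr (Or.inr ((hmemR _).mpr (Or.inr (Or.inr ⟨j, rfl⟩))))
          · have hjσ : j ≠ σ := fun hc => h1 ⟨hc, by omega⟩
            exact Or.inr (Or.inr ((hmemR _).mpr (Or.inr (Or.inl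
              ⟨i, ⟨by omega, by omega⟩, j, hjσ, rfl⟩))))
    · exact Or.inr (Or.inl ((hmemM _).mpr ⟨j, rfl⟩))
  -- disjointness
  have hdLM : Disjoint Lfin Mfin := by
    rw [Finset.disjoint_left]
    intro x hxL hxM
    obtain ⟨j, rfl⟩ := (hmemM x).mp hxM
    exact F3a j (hF1 _ hxL)
  have hdLR : Disjoint Lfin Rfin := by
    rw [Finset.disjoint_left]
    intro x hxL hxR
    exact F4 x (hF1 x hxL) (hF2 x hxR)
  have hdMR : Disjoint Mfin Rfin := by
    rw [Finset.disjoint_left]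
    intro x hxM hxR
    obtain ⟨j, rfl⟩ := (hmemM x).mp hxM
    exact F3b j (hF2 _ hxR)
  -- set equalities
  have hQeq : Q = ↑(Lfin ∪ Mfin ∪ Rfin) := by
    ext x
    simp only [Finset.coe_union, Set.mem_union, Finset.mem_coe]
    constructor
    · intro hx
      rcases hcover x hx with h | h | h
      exacts [Or.inl (Or.inl h), Or.inl (Or.inr h), Or.inr h]
    · rintro ((h | h) | h)
      exacts [hLQ x h, hMQ x h, hRQ x h]
  have hQfin : Q.Finite := by rw [hQeq]; exact (Lfin ∪ Mfin ∪ Rfin).finite_toSet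
  have hsetL : {x ∈ Q | dictLt x (Z ++ [a0])} = ↑Lfin := by
    ext x
    simp only [Set.mem_setOf_eq, Finset.mem_coe]
    constructor
    · rintro ⟨hxQ, hlt⟩
      rcases hcover x hxQ with h | h | h
      · exact h
      · obtain ⟨j, rfl⟩ := (hmemM x).mp h
        exact absurd hlt (F3a j)
      · exact (F4 x hlt (hF2 x h)).elim
    · intro h
      exact ⟨hLQ x h, hF1 x h⟩
  have hsetR : {x ∈ Q | dictLt (Z ++ [ak]) x} = ↑Rfin := by
    ext x
    simp only [Set.mem_setOf_eq, Finset.mem_coe]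
    constructor
    · rintro ⟨hxQ, hlt⟩
      rcases hcover x hxQ with h | h | h
      · exact (F4 x (hF1 x h) hlt).elim
      · obtain ⟨j, rfl⟩ := (hmemM x).mp h
        exact absurd hlt (F3b j)
      · exact h
    · intro h
      exact ⟨hRQ x h, hF2 x h⟩
  -- cardinalities
  have hcard_filter_ne : (Finset.univ.filter (fun j : Fin k => j ≠ σ)).card = k - 1 := by
    have he : Finset.univ.filter (fun j : Fin k => j ≠ σ) = Finset.univ.erase σ := by
      ext j; simp [Finset.mem_erase]
    rw [he, Finset.card_erase_of_mem (Finset.mem_univ σ)]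
    simp
  have hcard_lt : (Finset.univ.filter (fun j : Fin k => j < τ)).card = t := by
    have he : Finset.univ.filter (fun j : Fin k => j < τ) = Finset.Iio τ := by
      ext j; simp
    rw [he, Fin.card_Iio]
  have hcard_mid : (Finset.univ.filter (fun j : Fin k => τ < j ∧ j ≠ σ)).card = k - 1 - t - 1 := by
    have he : Finset.univ.filter (fun j : Fin k => τ < j ∧ j ≠ σ) = Finset.Ioo τ σ := by
      ext j
      simp only [Finset.mem_filter, Finset.mem_univ, true_and, Finset.mem_Ioo]
      constructor
      · rintro ⟨h1, h2⟩; exact ⟨h1, hjσ_lt j h2⟩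
      · rintro ⟨h1, h2⟩; exact ⟨h1, ne_of_lt h2⟩
    rw [he, Fin.card_Ioo]
    omega
  have hrowdisj : ∀ (S S' : Finset (Fin k)) (i i' : ℕ), i ≠ i' →
      Disjoint (S.image (fun j : Fin k => rep i ++ [j])) (S'.image (fun j : Fin k => rep i' ++ [j])) := by
    intro S S' i i' hne
    rw [Finset.disjoint_left]
    rintro x hx hx'
    simp only [Finset.mem_image] at hx hx'
    obtain ⟨j, _, rfl⟩ := hx
    obtain ⟨j', _, he⟩ := hx'
    exact hne (hci he.symm).1
  have hcardL : Lfin.card = (k-1) * q + t := by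
    rw [hLf, Finset.card_union_of_disjoint]
    · rw [Finset.card_biUnion]
      · simp only [Finset.card_image_of_injective _ (hinj _), hcard_filter_ne, hcard_lt,
          Finset.sum_const, Finset.card_range, smul_eq_mul]
        ring
      · intro i hi i' hi' hne
        exact hrowdisj _ _ i i' hne
    · rw [Finset.disjoint_left]
      rintro x hx hx'
      simp only [Finset.mem_biUnion, Finset.mem_range] at hx
      obtain ⟨i, hi, hx⟩ := hx
      simp only [Finset.mem_image] at hx hx'
      obtain ⟨j, _, rfl⟩ := hx
      obtain ⟨j', _, he⟩ := hx'
      have := (hci he.symm).1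
      omega
  have hcardM : Mfin.card = k := by
    rw [hMf, Finset.card_image_of_injective _ (hinj Z)]
    simp
  have hcardR : Rfin.card = (k-1) * (p'+1+1) - t := by
    rw [hRf, Finset.card_union_of_disjoint, Finset.card_union_of_disjoint]
    · rw [Finset.card_biUnion]
      · simp only [Finset.card_image_of_injective _ (hinj _), hcard_filter_ne, hcard_mid,
          Finset.sum_const, Nat.card_Ico, smul_eq_mul, Finset.card_univ, Fintype.card_fin]
        have h2 : (k-1) * (p'+1+1) = p' * (k-1) + (k-1) + (k-1) := by ring
        rw [show (q + p' + 1 - (q + 1)) = p' by omega]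
        omega
      · intro i hi i' hi' hne
        exact hrowdisj _ _ i i' hne
    · rw [Finset.disjoint_left]
      rintro x hx hx'
      simp only [Finset.mem_image] at hx
      simp only [Finset.mem_biUnion, Finset.mem_Ico, Finset.mem_image] at hx'
      obtain ⟨j, _, rfl⟩ := hx
      obtain ⟨i, hi, j', _, he⟩ := hx'
      have := (hci he).1
      omega
    · rw [Finset.disjoint_left]
      rintro x hx hx'
      simp only [Finset.mem_union, Finset.mem_biUnion, Finset.mem_Ico, Finset.mem_image,
        Finset.mem_filter] at hx
      simp only [Finset.mem_image] at hx'
      obtain ⟨j', _, he'⟩ := hx'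
      rcases hx with ⟨j, _, rfl⟩ | ⟨i, hi, j, _, rfl⟩
      · have := (hci he'.symm).1
        omega
      · have := (hci he'.symm).1
        omega
  -- inner leaves
  have hZQ : ∀ a : Fin k, Z ++ [a] ∈ Q := fun a => (hmem_Q _).mpr (Or.inr ⟨a, rfl⟩)
  have hZnotQ : Z ∉ Q := fun h => h.2 (Or.inr rfl)
  have hILZ : InnerLeaf Q Z := ⟨⟨⟨Z ++ [τ], hZQ τ, List.prefix_append _ _⟩, hZnotQ⟩, hZQ⟩
  have hZ'Q : ∀ a : Fin k, rep (q+p'+1) ++ [a] ∈ Q := fun a =>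
    (hmem_Q _).mpr (Or.inl ⟨q+p'+1, a, rfl, le_refl _, fun hc => by omega, fun hc => by omega⟩)
  have hZ'notQ : rep (q+p'+1) ∉ Q := fun h =>
    h.2 (Or.inl ⟨q+p'+1, Set.mem_Iic.mpr (by omega), rfl⟩)
  have hILZ' : InnerLeaf Q (rep (q+p'+1)) := ⟨⟨⟨_, hZ'Q τ, List.prefix_append _ _⟩, hZ'notQ⟩, hZ'Q⟩
  have hZ'neZ : rep (q+p'+1) ≠ Z := by
    rw [hZ]
    simp only [hrep]
    exact rep_ne_rep_concat hτσ (q+p'+1) q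
  refine ⟨Q, hQfin, hmaxQ, ?_, Z, hILZ, ?_, ?_, rep (q+p'+1), hZ'neZ, hILZ'⟩
  · rw [hQeq, Set.ncard_coe_finset,
      Finset.card_union_of_disjoint (Finset.disjoint_union_left.mpr ⟨hdLR, hdMR⟩),
      Finset.card_union_of_disjoint hdLM, hcardL, hcardM, hcardR]
  · rw [hsetL, Set.ncard_coe_finset, hcardL]
  · rw [hsetR, Set.ncard_coe_finset, hcardR]

end Core


section Mirror
variable {k : ℕ}

def mir (u : Word k) : Word k := u.map Fin.rev

lemma mir_mir (u : Word k) : mir (mir u) = u := by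
  simp [mir, List.map_map, Function.comp_def, Fin.rev_rev]

lemma mir_inj : Function.Injective (mir (k := k)) := by
  intro u v h
  rw [← mir_mir u, h, mir_mir]

lemma mir_append (u v : Word k) : mir (u ++ v) = mir u ++ mir v := by
  simp [mir]

lemma mir_prefix_iff {u v : Word k} : mir u <+: mir v ↔ u <+: v := by
  constructor
  · intro h
    have := h.map (Fin.rev)
    simpa [mir, List.map_map, Function.comp_def, Fin.rev_rev] using this
  · intro h
    exact h.map _

lemma lex_cons_iff' {a b : Fin k} {u v : Word k} :
    List.Lex (· < ·) (a :: u) (b :: v) ↔ a < b ∨ (a = b ∧ List.Lex (· < ·) u v) := by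
  constructor
  · intro h
    cases h with
    | cons h => exact Or.inr ⟨rfl, h⟩
    | rel h => exact Or.inl h
  · rintro (h | ⟨rfl, h⟩)
    exacts [List.Lex.rel h, List.Lex.cons h]

lemma mir_lex_incomp {u v : Word k} (h1 : ¬ u <+: v) (h2 : ¬ v <+: u) :
    dictLt (mir u) (mir v) ↔ dictLt v u := by
  obtain ⟨c, a, b, x, y, hab, rfl, rfl⟩ := incomp_decomp h1 h2
  have e1 : mir (c ++ a :: x) = mir c ++ Fin.rev a :: mir x := by simp [mir]
  have e2 : mir (c ++ b :: y) = mir c ++ Fin.rev b :: mir y := by simp [mir]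
  rw [dictLt, dictLt, e1, e2, lex_append_iff, lex_append_iff, lex_cons_iff', lex_cons_iff']
  have hrev : Fin.rev a ≠ Fin.rev b := fun h => hab (Fin.rev_injective h)
  have hne' : b ≠ a := fun h => hab h.symm
  simp only [Fin.rev_lt_rev]
  tauto

/-- Transport of the whole package along the mirror map. -/
lemma mirror_transport (a0 ak : Fin k) (h0 : (a0 : ℕ) = 0) (hak : (ak : ℕ) = k - 1)
    {Q : Set (Word k)} (hfin : Q.Finite) (hmax : MaxPrefixCode Q) {Z : Word k}
    (hZ : InnerLeaf Q Z) {Z' : Word k} (hZ' : Z' ≠ Z) (hZ'il : InnerLeaf Q Z') :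
    ∃ Q2 : Set (Word k), Q2.Finite ∧ MaxPrefixCode Q2 ∧ Q2.ncard = Q.ncard ∧
      ∃ Z2 : Word k, InnerLeaf Q2 Z2 ∧
        {x ∈ Q2 | dictLt x (Z2 ++ [a0])}.ncard = {x ∈ Q | dictLt (Z ++ [ak]) x}.ncard ∧
        {x ∈ Q2 | dictLt (Z2 ++ [ak]) x}.ncard = {x ∈ Q | dictLt x (Z ++ [a0])}.ncard ∧
        ∃ Z2' : Word k, Z2' ≠ Z2 ∧ InnerLeaf Q2 Z2' := by
  have hrev0 : Fin.rev a0 = ak := by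
    apply Fin.val_injective
    rw [Fin.val_rev]
    omega
  have hrevk : Fin.rev ak = a0 := by
    apply Fin.val_injective
    rw [Fin.val_rev]
    omega
  have hmirQ : ∀ {y : Word k}, y ∈ Q → mir y ∈ mir '' Q := fun hy => ⟨_, hy, rfl⟩
  -- prefix code
  have hpc2 : PrefixCode (mir '' Q) := by
    rintro u ⟨a, ha, rfl⟩ v ⟨b, hb, rfl⟩ hab
    rw [mir_prefix_iff] at hab
    rw [hmax.1 a ha b hb hab]
  have hmax2 : MaxPrefixCode (mir '' Q) := by
    refine maxPC_of_comparable hpc2 fun x => ?_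
    obtain ⟨p, hp, hcomp⟩ := exists_comparable hmax (mir x)
    refine ⟨mir p, hmirQ hp, ?_⟩
    rcases hcomp with h | h
    · left
      have := h.map (Fin.rev)
      simpa [mir, List.map_map, Function.comp_def, Fin.rev_rev] using this
    · right
      have := h.map (Fin.rev)
      simpa [mir, List.map_map, Function.comp_def, Fin.rev_rev] using this
  have hfin2 : (mir '' Q).Finite := hfin.image _
  have hcard2 : (mir '' Q).ncard = Q.ncard := Set.ncard_image_of_injective _ mir_inj
  -- inner leaf transport
  have hil : ∀ {W : Word k}, InnerLeaf Q W → InnerLeaf (mir '' Q) (mir W) := by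
    rintro W ⟨⟨⟨v, hv, hWv⟩, hWQ⟩, hch⟩
    refine ⟨⟨⟨mir v, hmirQ hv, hWv.map _⟩, ?_⟩, fun a => ?_⟩
    · rintro ⟨y, hy, he⟩
      exact hWQ (mir_inj he ▸ hy)
    · have : mir (W ++ [Fin.rev a]) = mir W ++ [a] := by
        rw [mir_append]
        simp [mir, Fin.rev_rev]
      exact this ▸ hmirQ (hch (Fin.rev a))
  -- count transport
  have key : ∀ (w : Word k), w ∈ Q → ∀ y ∈ Q,
      (dictLt (mir y) (mir w) ↔ dictLt w y) := by
    intro w hw y hy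
    by_cases hyw : y = w
    · subst hyw
      constructor
      · intro h; exact absurd h (dictLt_irrefl _)
      · intro h; exact absurd h (dictLt_irrefl _)
    · have h1 : ¬ y <+: w := fun h => hyw (hmax.1 y hy w hw h)
      have h2 : ¬ w <+: y := fun h => hyw ((hmax.1 w hw y hy h).symm)
      exact mir_lex_incomp h1 h2
  have hsetA : {x ∈ mir '' Q | dictLt x (mir Z ++ [a0])} =
      mir '' {y ∈ Q | dictLt (Z ++ [ak]) y} := by
    have he : mir Z ++ [a0] = mir (Z ++ [ak]) := by
      rw [mir_append]
      simp [mir, hrevk]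
    ext x
    constructor
    · rintro ⟨⟨y, hy, rfl⟩, hlt⟩
      rw [he] at hlt
      exact ⟨y, ⟨hy, (key _ (hZ.2 ak) y hy).mp hlt⟩, rfl⟩
    · rintro ⟨y, ⟨hy, hlt⟩, rfl⟩
      exact ⟨hmirQ hy, he ▸ ((key _ (hZ.2 ak) y hy).mpr hlt)⟩
  have hsetB : {x ∈ mir '' Q | dictLt (mir Z ++ [ak]) x} =
      mir '' {y ∈ Q | dictLt y (Z ++ [a0])} := by
    have he : mir Z ++ [ak] = mir (Z ++ [a0]) := by
      rw [mir_append]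
      simp [mir, hrev0]
    have key' : ∀ y ∈ Q, (dictLt (mir (Z ++ [a0])) (mir y) ↔ dictLt y (Z ++ [a0])) := by
      intro y hy
      by_cases hyw : y = Z ++ [a0]
      · subst hyw
        constructor
        · intro h; exact absurd h (dictLt_irrefl _)
        · intro h; exact absurd h (dictLt_irrefl _)
      · have h1 : ¬ y <+: Z ++ [a0] := fun h => hyw (hmax.1 y hy _ (hZ.2 a0) h)
        have h2 : ¬ Z ++ [a0] <+: y := fun h => hyw ((hmax.1 _ (hZ.2 a0) y hy h).symm)
        exact mir_lex_incomp h2 h1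
    ext x
    constructor
    · rintro ⟨⟨y, hy, rfl⟩, hlt⟩
      rw [he] at hlt
      exact ⟨y, ⟨hy, (key' y hy).mp hlt⟩, rfl⟩
    · rintro ⟨y, ⟨hy, hlt⟩, rfl⟩
      exact ⟨hmirQ hy, he ▸ ((key' y hy).mpr hlt)⟩
  refine ⟨mir '' Q, hfin2, hmax2, hcard2, mir Z, hil hZ, ?_, ?_, mir Z', ?_, hil hZ'il⟩
  · rw [hsetA, Set.ncard_image_of_injective _ mir_inj]
  · rw [hsetB, Set.ncard_image_of_injective _ mir_inj]
  · exact fun h => hZ' (mir_inj h)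

end Mirror

section Final
variable {k : ℕ}

lemma construction (hk : 2 ≤ k) (ℓ r : ℕ) (hdvd : (k-1) ∣ (ℓ + r))
    (hbig : 2*(k-1) ≤ r + ℓ % (k-1)) (a0 ak : Fin k) (h0 : (a0 : ℕ) = 0)
    (hak : (ak : ℕ) = k - 1) :
    ∃ Q : Set (Word k), Q.Finite ∧ MaxPrefixCode Q ∧ Q.ncard = ℓ + k + r ∧
      ∃ Z : Word k, InnerLeaf Q Z ∧
        {x ∈ Q | dictLt x (Z ++ [a0])}.ncard = ℓ ∧
        {x ∈ Q | dictLt (Z ++ [ak]) x}.ncard = r ∧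
        ∃ Z' : Word k, Z' ≠ Z ∧ InnerLeaf Q Z' := by
  have ht : ℓ % (k-1) < k - 1 := Nat.mod_lt _ (by omega)
  have hℓeq : (k-1) * (ℓ / (k-1)) + ℓ % (k-1) = ℓ := Nat.div_add_mod ℓ (k-1)
  have hdvd2 : (k-1) ∣ (r + ℓ % (k-1)) := by
    have heq : ℓ + r = (k-1) * (ℓ / (k-1)) + (r + ℓ % (k-1)) := by omega
    exact (Nat.dvd_add_right (dvd_mul_right (k-1) (ℓ / (k-1)))).mp (heq ▸ hdvd)
  obtain ⟨m, hm⟩ := hdvd2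
  have hm2 : 2 ≤ m := by
    rcases Nat.lt_or_ge m 2 with h | h
    · have : (k-1) * m ≤ (k-1) * 1 := Nat.mul_le_mul_left _ (by omega)
      omega
    · exact h
  obtain ⟨Q, h1, h2, h3, Z, h4, h5, h6, Z', h7, h8⟩ :=
    construction_core hk (ℓ / (k-1)) (m-1) (ℓ % (k-1)) (by omega) ht a0 ak h0 hak
  rw [show m - 1 + 1 = m by omega] at h3 h6
  have hr : (k-1) * m - ℓ % (k-1) = r := by omega
  rw [hℓeq, hr] at h3
  rw [hℓeq] at h5
  rw [hr] at h6
  exact ⟨Q, h1, h2, h3, Z, h4, h5, h6, Z', h7, h8⟩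

theorem statement15' (hk : 2 ≤ k) (P : Set (Word k)) (hfin : P.Finite)
    (hmax : MaxPrefixCode P) (hcard : 1 + (k - 1) * (k + 1) < P.ncard)
    (z : Word k) (hz : InnerLeaf P z) (ℓ r : ℕ)
    (a0 ak : Fin k) (h0 : (a0 : ℕ) = 0) (hak : (ak : ℕ) = k - 1)
    (hℓ : ℓ = {x ∈ P | dictLt x (z ++ [a0])}.ncard)
    (hr : r = {x ∈ P | dictLt (z ++ [ak]) x}.ncard) :
    ∃ Q : Set (Word k), Q.Finite ∧ MaxPrefixCode Q ∧ Q.ncard = P.ncard ∧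
      ∃ Z : Word k, InnerLeaf Q Z ∧
        {x ∈ Q | dictLt x (Z ++ [a0])}.ncard = ℓ ∧
        {x ∈ Q | dictLt (Z ++ [ak]) x}.ncard = r ∧
        ∃ Z' : Word k, Z' ≠ Z ∧ InnerLeaf Q Z' := by
  have hone : 1 < P.ncard := by omega
  have hne : P.Nonempty := by
    rw [← Set.ncard_pos hfin]
    omega
  have hpart : P.ncard = ℓ + k + r := by
    rw [hℓ, hr]
    exact P_partition hfin hmax hz a0 ak h0 hak
  have hform := card_formula (by omega : 1 ≤ k) hfin hmax hne
  obtain ⟨N', hN'⟩ : ∃ N', (spref P).ncard = N' + 1 := by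
    refine ⟨(spref P).ncard - 1, ?_⟩
    have : (spref P).ncard ≠ 0 := by
      intro h
      rw [h] at hform
      omega
    omega
  rw [hN'] at hform
  have hexp : (k-1) * (N' + 1) = (k-1) * N' + (k-1) := by ring
  have hlr : ℓ + r = (k-1) * N' := by omega
  have hsize : (k-1) * (k+1) ≤ ℓ + r := by
    have hgt : (k-1) * k < (k-1) * N' := by
      have hx : (k-1) * (k+1) = (k-1) * k + (k-1) := by ring
      omega
    have hkN : k < N' := Nat.lt_of_mul_lt_mul_left hgt
    calc (k-1) * (k+1) ≤ (k-1) * N' := Nat.mul_le_mul_left _ (by omega)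
    _ = ℓ + r := hlr.symm
  have hdvd : (k-1) ∣ (ℓ + r) := ⟨N', hlr⟩
  by_cases hcase : 2*(k-1) ≤ r + ℓ % (k-1)
  · obtain ⟨Q, h1, h2, h3, Z, h4, h5, h6, Z', h7, h8⟩ :=
      construction hk ℓ r hdvd hcase a0 ak h0 hak
    exact ⟨Q, h1, h2, by omega, Z, h4, h5, h6, Z', h7, h8⟩
  · have hrsmall : r < 2*(k-1) := by omega
    have hl2 : 2*(k-1) ≤ ℓ + r % (k-1) := by
      obtain ⟨a, hka⟩ : ∃ a, k = a + 2 := ⟨k-2, by omega⟩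
      subst hka
      have e1 : (a+2) - 1 = a + 1 := by omega
      rw [e1] at hsize hrsmall ⊢
      have e2 : (a+1)*(a+2+1) = (a+1)*(a+1) + 2*(a+1) := by ring
      nlinarith [Nat.zero_le (r % (a+1)), sq_nonneg a]
    obtain ⟨Q, h1, h2, h3, Z, h4, h5, h6, Z', h7, h8⟩ :=
      construction hk r ℓ (by rwa [Nat.add_comm] at hdvd) hl2 a0 ak h0 hak
    obtain ⟨Q2, g1, g2, g3, Z2, g4, g5, g6, Z2', g7, g8⟩ :=
      mirror_transport a0 ak h0 hak h1 h2 h4 h7 h8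
    refine ⟨Q2, g1, g2, by omega, Z2, g4, ?_, ?_, Z2', g7, g8⟩
    · rw [g5, h6]
    · rw [g6, h5]

end Final

/-- **Statement 15.** Let `P` be a finite maximal prefix code with `|P| > k²`,
`z` an inner leaf of `P` with `ℓ` leaves of `P` strictly to its left and `r`
strictly to its right (in dictionary order). Then there is a finite maximal
prefix code `Q` of the same cardinality having an inner leaf `Z` with exactly
`ℓ` leaves to its left and `r` to its right, and a second inner leaf `Z' ≠ Z`. -/
theorem statement15 (k : ℕ) (hk : 2 ≤ k) (P : Set (Word k)) (hfin : P.Finite)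
    (hmax : MaxPrefixCode P) (hcard : 1 + (k - 1) * (k + 1) < P.ncard)
    (z : Word k) (hz : InnerLeaf P z) (ℓ r : ℕ)
    (hℓ : ℓ = {x ∈ P | dictLt x (z ++ [⟨0, by omega⟩])}.ncard)
    (hr : r = {x ∈ P | dictLt (z ++ [⟨k - 1, by omega⟩]) x}.ncard) :
    ∃ Q : Set (Word k), Q.Finite ∧ MaxPrefixCode Q ∧ Q.ncard = P.ncard ∧
      ∃ Z : Word k, InnerLeaf Q Z ∧
        {x ∈ Q | dictLt x (Z ++ [⟨0, by omega⟩])}.ncard = ℓ ∧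
        {x ∈ Q | dictLt (Z ++ [⟨k - 1, by omega⟩]) x}.ncard = r ∧
        ∃ Z' : Word k, Z' ≠ Z ∧ InnerLeaf Q Z' := by
  exact statement15' hk P hfin hmax hcard z hz ℓ r ⟨0, by omega⟩ ⟨k - 1, by omega⟩ rfl rfl hℓ hr
end

section
/- Let φ : P·A* → A* be a right ideal homomorphism with P ⊆ A* a finite prefix code. Then there exists a finite prefix code P' ⊆ P·A* such that: (i) every nonempty right ideal of A* that intersects P·A* also intersects P'·A* (so the restriction of φ to P'·A* is an essential restriction of φ), and (ii) φ(P') is a prefix code. -/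
/-- **Statement 19.** Every right ideal homomorphism `φ : P·A* → A*` (with `P` a
finite prefix code) has an essential restriction to a right ideal `P'·A*` such
that `φ(P')` is a prefix code: `P' ⊆ P·A*` is a finite prefix code, every
nonempty right ideal intersecting `P·A*` also intersects `P'·A*`, and `φ(P')`
is a prefix code. -/
theorem statement19 (k : ℕ) (hk : 2 ≤ k) (P : Set (Word k)) (hfin : P.Finite)
    (hP : PrefixCode P) (φ : Word k →. Word k)
    (hhom : IsRIH φ) (hdom : φ.Dom = genIdeal P) :
    ∃ P' : Set (Word k), P'.Finite ∧ PrefixCode P' ∧ P' ⊆ genIdeal P ∧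
      (∀ I : Set (Word k), RightIdeal I → I.Nonempty →
        (I ∩ genIdeal P).Nonempty → (I ∩ genIdeal P').Nonempty) ∧
      PrefixCode (φ.image P') := by
  classical
  have hk0 : 0 < k := by omega
  -- value function of φ
  set f : Word k → Word k := fun p => if h : (φ p).Dom then (φ p).get h else [] with hf_def
  have hf : ∀ p ∈ P, f p ∈ φ p := by
    intro p hp
    have hd : p ∈ φ.Dom := by rw [hdom]; exact ⟨p, hp, List.prefix_refl p⟩
    have hd' : (φ p).Dom := hd
    simp only [hf_def, dif_pos hd']
    exact Part.get_mem hd'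
  set L : ℕ := hfin.toFinset.sup (fun p => (f p).length) with hL_def
  have hle : ∀ p ∈ P, (f p).length ≤ L := by
    intro p hp
    exact Finset.le_sup (f := fun p => (f p).length) (hfin.mem_toFinset.mpr hp)
  set P' : Set (Word k) :=
    ⋃ p ∈ P, (fun w => p ++ w) '' {w : Word k | w.length = L - (f p).length} with hP'_def
  have hmem : ∀ x, x ∈ P' ↔
      ∃ p ∈ P, ∃ w : Word k, w.length = L - (f p).length ∧ x = p ++ w := by
    intro x
    simp only [hP'_def, Set.mem_iUnion, Set.mem_image, Set.mem_setOf_eq]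
    constructor
    · rintro ⟨p, hp, w, hw, rfl⟩; exact ⟨p, hp, w, hw, rfl⟩
    · rintro ⟨p, hp, w, hw, rfl⟩; exact ⟨p, hp, w, hw, rfl⟩
  refine ⟨P', ?_, ?_, ?_, ?_, ?_⟩
  · -- finiteness
    exact Set.Finite.biUnion hfin (fun p _ =>
      (List.finite_length_eq (Fin k) (L - (f p).length)).image _)
  · -- prefix code
    intro u hu v hv huv
    obtain ⟨p, hp, w, hw, rfl⟩ := (hmem u).mp hu
    obtain ⟨q, hq, z, hz, rfl⟩ := (hmem v).mp hv
    have hpq : p = q := by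
      have h1 : p <+: q ++ z := (List.prefix_append p w).trans huv
      have h2 : q <+: q ++ z := List.prefix_append q z
      rcases List.prefix_or_prefix_of_prefix h1 h2 with h | h
      · exact hP p hp q hq h
      · exact (hP q hq p hp h).symm
    subst hpq
    have hwz : w <+: z := (List.prefix_append_right_inj p).mp huv
    rw [hwz.eq_of_length (by omega)]
  · -- P' ⊆ genIdeal P
    intro x hx
    obtain ⟨p, hp, w, _, rfl⟩ := (hmem x).mp hx
    exact ⟨p, hp, List.prefix_append p w⟩
  · -- essentiality
    intro I hI _ ⟨x, hxI, hxP⟩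
    obtain ⟨p, hp, s, rfl⟩ := hxP
    set n := L - (f p).length with hn
    set a : Word k := List.replicate n (⟨0, hk0⟩ : Fin k) with ha
    refine ⟨(p ++ s) ++ a, hI _ hxI a, p ++ (s ++ a).take n, ?_, ?_⟩
    · refine (hmem _).mpr ⟨p, hp, (s ++ a).take n, ?_, rfl⟩
      simp [ha, hn]
    · rw [List.append_assoc]
      exact (List.prefix_append_right_inj p).mpr (List.take_prefix n (s ++ a))
  · -- φ(P') is a prefix code
    have hval : ∀ x ∈ P', ∀ y, y ∈ φ x → y.length = L := by
      intro x hx y hy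
      obtain ⟨p, hp, w, hw, rfl⟩ := (hmem x).mp hx
      have h1 : f p ++ w ∈ φ (p ++ w) := hhom p (f p) (hf p hp) w
      have h2 := Part.mem_unique hy h1
      have := hle p hp
      rw [h2, List.length_append, hw]; omega
    intro u hu v hv huv
    obtain ⟨xu, hxu, hu'⟩ := (PFun.mem_image φ u P').mp hu
    obtain ⟨xv, hxv, hv'⟩ := (PFun.mem_image φ v P').mp hv
    exact huv.eq_of_length (by rw [hval xu hxu u hu', hval xv hxv v hv'])
end
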